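/- arXiv:0806.0430 — 7 statements merged into one kernel-verified Lean document; each statement's English description precedes it below -/
import Mathlib

section
/- Let (X,μ) be a standard probability space and E a countable, measure-preserving equivalence relation on (X,μ). Define ψ_E(S,T) = μ({x : S⁻¹(x) E T⁻¹(x)}) for S,T ∈ Aut(X,μ). Then ψ_E is a positive-definite kernel on Aut(X,μ): for all S_1,…,S_n ∈ Aut(X,μ) and all α_1,…,α_n ∈ ℂ, the sum Σ_{1≤i,j≤n} conj(α_i)·α_j·ψ_E(S_i,S_j) is a nonnegative real number. Consequently, the function φ_E(S) = μ({x : S(x) E x}) is a positive-definite function on the group Aut(X,μ): for all S_1,…,S_n ∈ Aut(X,μ) and α_1,…,α_n ∈ ℂ, Σ_{1≤i,j≤n} conj(α_i)·α_j·φ_E(S_i⁻¹∘S_j) is a nonnegative real. -/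
open MeasureTheory Filter Topology
open scoped ComplexOrder

/-- `E` is a countable, measure-preserving equivalence relation on `(X, μ)`:
a Borel equivalence relation with countable classes such that every Borel
automorphism contained in it preserves `μ`. -/
def IsCountableMPER {X : Type*} [MeasurableSpace X] (μ : Measure X)
    (E : X → X → Prop) : Prop :=
  Equivalence E ∧
  MeasurableSet {p : X × X | E p.1 p.2} ∧
  (∀ x, {y | E x y}.Countable) ∧
  ∀ T : X ≃ᵐ X, (∀ x, E (T x) x) → MeasurePreserving T μ μ

/-- The kernel `ψ_E(S,T) = μ({x : S⁻¹(x) E T⁻¹(x)})`. -/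
noncomputable def psiE {X : Type*} [MeasurableSpace X] (μ : Measure X)
    (E : X → X → Prop) (S T : X ≃ᵐ X) : ℝ :=
  (μ {x | E (S.symm x) (T.symm x)}).toReal

/-- The function `φ_E(S) = μ({x : S(x) E x})`. -/
noncomputable def phiE {X : Type*} [MeasurableSpace X] (μ : Measure X)
    (E : X → X → Prop) (S : X ≃ᵐ X) : ℝ :=
  (μ {x | E (S x) x}).toReal

/-! For a fixed point `x`, the kernel `(S, T) ↦ [S⁻¹x E T⁻¹x]` is the Gram kernel of the unit
vectors `δ_[S⁻¹x]` in `ℓ²(X/E)`, hence positive definite. `ψ_E` is the integral of these kernels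
over `x`, and positive definiteness survives integration. Finally `φ_E(S⁻¹T) = ψ_E(S, T)` because
`T` preserves `μ`. -/

open scoped InnerProductSpace

def IsPosDefKernel {ι : Type*} (K : ι → ι → ℂ) : Prop :=
  ∀ (n : ℕ) (v : Fin n → ι) (α : Fin n → ℂ),
    0 ≤ ∑ i, ∑ j, (starRingEnd ℂ) (α i) * α j * K (v i) (v j)

theorem isPosDefKernel_inner {ι E : Type*} [NormedAddCommGroup E] [InnerProductSpace ℂ E]
    (u : ι → E) : IsPosDefKernel (fun a b => ⟪u a, u b⟫_ℂ) := by
  intro n v α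
  have hgram : ∑ i, ∑ j, (starRingEnd ℂ) (α i) * α j * ⟪u (v i), u (v j)⟫_ℂ
      = ⟪∑ i, α i • u (v i), ∑ j, α j • u (v j)⟫_ℂ := by
    rw [sum_inner]
    simp only [inner_sum, inner_smul_left, inner_smul_right]
    exact Finset.sum_congr rfl fun i _ => Finset.sum_congr rfl fun j _ => by ring
  rw [hgram, inner_self_eq_norm_sq_to_K]
  exact pow_nonneg (RCLike.ofReal_nonneg.mpr (norm_nonneg _)) 2

open Classical in
theorem isPosDefKernel_ite_rel {ι β : Type*} {r : β → β → Prop} (hr : Equivalence r)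
    (g : ι → β) : IsPosDefKernel (fun a b => if r (g a) (g b) then 1 else 0) := by
  let u : ι → lp (fun _ : Quot r => ℂ) 2 := fun a => lp.single 2 (Quot.mk r (g a)) 1
  have hu : (fun a b => ⟪u a, u b⟫_ℂ) = fun a b => if r (g a) (g b) then 1 else 0 := by
    ext a b
    simp [u, lp.inner_single_left, lp.single_apply, Pi.single_apply, hr.quot_mk_eq_iff]
  exact hu ▸ isPosDefKernel_inner u

theorem IsPosDefKernel.integral {X ι : Type*} [MeasurableSpace X] {μ : Measure X}
    {K : X → ι → ι → ℂ} (hK : ∀ x, IsPosDefKernel (K x))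
    (hint : ∀ a b, Integrable (fun x => K x a b) μ) :
    IsPosDefKernel (fun a b => ∫ x, K x a b ∂μ) := by
  intro n v α
  have hswap : ∑ i, ∑ j, (starRingEnd ℂ) (α i) * α j * ∫ x, K x (v i) (v j) ∂μ
      = ∫ x, ∑ i, ∑ j, (starRingEnd ℂ) (α i) * α j * K x (v i) (v j) ∂μ := by
    rw [integral_finsetSum _ fun i _ => integrable_finsetSum _ fun j _ => (hint _ _).const_mul _]
    refine Finset.sum_congr rfl fun i _ => ?_
    rw [integral_finsetSum _ fun j _ => (hint _ _).const_mul _]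
    simp only [integral_const_mul]
  rw [hswap]
  exact integral_nonneg fun x => hK x n v α

theorem measurableSet_setOf_rel {X : Type*} [MeasurableSpace X] {E : X → X → Prop}
    (hE : MeasurableSet {p : X × X | E p.1 p.2}) {f g : X → X} (hf : Measurable f)
    (hg : Measurable g) : MeasurableSet {x | E (f x) (g x)} :=
  hE.preimage (hf.prodMk hg)

open Classical in
theorem psiE_eq_integral {X : Type*} [MeasurableSpace X] (μ : Measure X) [IsFiniteMeasure μ]
    {E : X → X → Prop} (hE : MeasurableSet {p : X × X | E p.1 p.2}) (S T : X ≃ᵐ X) :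
    (psiE μ E S T : ℂ) = ∫ x, if E (S.symm x) (T.symm x) then 1 else 0 ∂μ := by
  have hs := measurableSet_setOf_rel hE S.symm.measurable T.symm.measurable
  calc (psiE μ E S T : ℂ) = ∫ x, {x | E (S.symm x) (T.symm x)}.indicator (fun _ => 1) x ∂μ := by
        rw [integral_indicator_const _ hs]
        simp [psiE, measureReal_def]
    _ = ∫ x, if E (S.symm x) (T.symm x) then 1 else 0 ∂μ := rfl

open Classical in
theorem isPosDefKernel_psiE {X : Type*} [MeasurableSpace X] (μ : Measure X) [IsFiniteMeasure μ]
    {E : X → X → Prop} (hE : Equivalence E) (hm : MeasurableSet {p : X × X | E p.1 p.2}) :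
    IsPosDefKernel (fun S T => (psiE μ E S T : ℂ)) := by
  rw [funext₂ (psiE_eq_integral μ hm)]
  refine IsPosDefKernel.integral
    (K := fun x (S T : X ≃ᵐ X) => if E (S.symm x) (T.symm x) then (1 : ℂ) else 0)
    (fun x => isPosDefKernel_ite_rel hE (g := fun S : X ≃ᵐ X => S.symm x)) fun S T => ?_
  exact (integrable_const 1).indicator
    (measurableSet_setOf_rel hm S.symm.measurable T.symm.measurable)

theorem phiE_trans_symm {X : Type*} [MeasurableSpace X] {μ : Measure X} {E : X → X → Prop}
    (hm : MeasurableSet {p : X × X | E p.1 p.2}) (S : X ≃ᵐ X) {T : X ≃ᵐ X}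
    (hT : MeasurePreserving T μ μ) : phiE μ E (T.trans S.symm) = psiE μ E S T := by
  have hs := measurableSet_setOf_rel hm S.symm.measurable T.symm.measurable
  rw [phiE, psiE, ← hT.measure_preimage hs.nullMeasurableSet]
  congr 2
  ext x
  simp

theorem psiE_positiveDefinite_and_phiE_positiveDefinite_general
    {X : Type} [MeasurableSpace X]
    (μ : Measure X) [IsProbabilityMeasure μ]
    (E : X → X → Prop) (hE : IsCountableMPER μ E) :
    (∀ (n : ℕ) (S : Fin n → X ≃ᵐ X), (∀ i, MeasurePreserving (S i) μ μ) →
      ∀ α : Fin n → ℂ,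
        0 ≤ ∑ i, ∑ j, (starRingEnd ℂ) (α i) * α j * (psiE μ E (S i) (S j) : ℂ)) ∧
    (∀ (n : ℕ) (S : Fin n → X ≃ᵐ X), (∀ i, MeasurePreserving (S i) μ μ) →
      ∀ α : Fin n → ℂ,
        0 ≤ ∑ i, ∑ j, (starRingEnd ℂ) (α i) * α j *
          (phiE μ E ((S j).trans (S i).symm) : ℂ)) := by
  obtain ⟨hEquiv, hm, -, -⟩ := hE
  have hψ := isPosDefKernel_psiE μ hEquiv hm
  refine ⟨fun n S _ α => hψ n S α, fun n S hS α => ?_⟩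
  simpa only [phiE_trans_symm hm _ (hS _)] using hψ n S α

/-- The kernel `ψ_E` is positive-definite on `Aut(X,μ)`, and consequently
`φ_E` is a positive-definite function on the group `Aut(X,μ)`. -/
theorem psiE_positiveDefinite_and_phiE_positiveDefinite
    {X : Type} [MeasurableSpace X] [StandardBorelSpace X]
    (μ : Measure X) [IsProbabilityMeasure μ]
    (E : X → X → Prop) (hE : IsCountableMPER μ E) :
    (∀ (n : ℕ) (S : Fin n → X ≃ᵐ X), (∀ i, MeasurePreserving (S i) μ μ) →
      ∀ α : Fin n → ℂ,
        0 ≤ ∑ i, ∑ j, (starRingEnd ℂ) (α i) * α j * (psiE μ E (S i) (S j) : ℂ)) ∧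
    (∀ (n : ℕ) (S : Fin n → X ≃ᵐ X), (∀ i, MeasurePreserving (S i) μ μ) →
      ∀ α : Fin n → ℂ,
        0 ≤ ∑ i, ∑ j, (starRingEnd ℂ) (α i) * α j *
          (phiE μ E ((S j).trans (S i).symm) : ℂ)) :=
  psiE_positiveDefinite_and_phiE_positiveDefinite_general μ E hE
end

section
/- Let (X,μ) be a standard probability space and E a countable, measure-preserving equivalence relation on (X,μ). For every S ∈ Aut(X,μ), 1 − φ_E(S) = inf{δ_u(S,T) : T ∈ [E]}, where δ_u(S,T) = μ({x : S(x) ≠ T(x)}); moreover the infimum is attained: there exists T ∈ [E] with δ_u(S,T) = 1 − φ_E(S). -/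
/-!
For `x`, the set of return times `{n | S^n x E x}` contains `0`. Put `T x = S^k x`, where `k` is
the next return time after `0`, or the least return time if there is no later one: `T` runs
cyclically through each cell (the part of an `S`-orbit lying in one `E`-class). Built the same
way from `S⁻¹`, this gives the inverse of `T`, so `T ∈ [E]`, and `T x = S x` exactly when
`S x E x`. The construction breaks down on cells that are bounded on one side only, so `T` is
the identity there. These cells form a null set because `μ` is invariant under partial
injections with graph in `E`. The first-return map would otherwise move the least points of
upward-infinite cells to infinitely many disjoint sets of equal positive measure. The lower
bound holds because any `T ∈ [E]` with `T x = S x` has `S x E x`.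
-/

open MeasureTheory Filter Topology

open Set Function

namespace MeasurableEquiv

variable {X : Type*} [MeasurableSpace X]

instance instGroup : Group (X ≃ᵐ X) where
  mul e f := f.trans e
  one := refl X
  inv := symm
  mul_assoc _ _ _ := rfl
  one_mul _ := rfl
  mul_one _ := rfl
  inv_mul_cancel e := ext (funext e.symm_apply_apply)

@[simp] lemma mul_apply (e f : X ≃ᵐ X) (x : X) : (e * f) x = e (f x) := rfl

@[simp] lemma one_apply (x : X) : (1 : X ≃ᵐ X) x = x := rfl

def measurePreservingSubgroup (μ : Measure X) : Subgroup (X ≃ᵐ X) where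
  carrier := {e | MeasurePreserving e μ μ}
  mul_mem' he hf := he.comp hf
  one_mem' := MeasurePreserving.id μ
  inv_mem' {e} he := he.symm e

lemma measurePreserving_zpow {μ : Measure X} {S : X ≃ᵐ X} (hS : MeasurePreserving S μ μ)
    (n : ℤ) : MeasurePreserving ⇑(S ^ n) μ μ :=
  zpow_mem (K := measurePreservingSubgroup μ) hS n

lemma measurable_zpow_apply (S : X ≃ᵐ X) {ν : X → ℤ} (hν : Measurable ν) :
    Measurable fun x => (S ^ ν x) x :=
  (measurable_from_prod_countable_left (f := fun p : X × ℤ => (S ^ p.2) p.1)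
    fun n => (S ^ n).measurable).comp (measurable_id.prodMk hν)

end MeasurableEquiv

namespace Int

open Classical in
/-- The successor of `0` in `s` for the cyclic order on `s` (greatest element followed by least).
It is `0` when `s` is bounded on one side only: successors do not form a bijection there. -/
noncomputable def cyclicSucc (s : Set ℤ) : ℤ :=
  if BddAbove s ↔ BddBelow s then
    if (s ∩ Ioi 0).Nonempty then sInf (s ∩ Ioi 0) else sInf s
  else 0

lemma isLeast_csInf {s : Set ℤ} (hs : s.Nonempty) (hb : BddBelow s) : IsLeast s (sInf s) :=
  ⟨csInf_mem hs hb, fun _ hm => csInf_le hb hm⟩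

lemma isLeast_csInf_inter_Ioi {s : Set ℤ} (hs : (s ∩ Ioi 0).Nonempty) :
    IsLeast (s ∩ Ioi 0) (sInf (s ∩ Ioi 0)) :=
  isLeast_csInf hs ⟨0, fun _ hm => le_of_lt hm.2⟩

section

variable {s : Set ℤ}

lemma cyclicSucc_spec (h0 : 0 ∈ s) (hb : BddAbove s ↔ BddBelow s) :
    IsLeast (s ∩ Ioi 0) (cyclicSucc s) ∨ (s ⊆ Iic 0 ∧ IsLeast s (cyclicSucc s)) := by
  rw [cyclicSucc, if_pos hb]
  split_ifs with hpos
  · exact Or.inl (isLeast_csInf_inter_Ioi hpos)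
  · have hle : s ⊆ Iic 0 := fun n hn => mem_Iic.2 (not_lt.1 fun h => hpos ⟨n, hn, h⟩)
    exact Or.inr ⟨hle, isLeast_csInf ⟨0, h0⟩ (hb.1 ⟨0, hle⟩)⟩

lemma cyclicSucc_mem (h0 : 0 ∈ s) : cyclicSucc s ∈ s := by
  by_cases hb : BddAbove s ↔ BddBelow s
  · rcases cyclicSucc_spec h0 hb with h | h
    exacts [h.1.1, h.2.1]
  · rwa [cyclicSucc, if_neg hb]

lemma cyclicSucc_eq_one (h1 : 1 ∈ s) (hb : BddAbove s ↔ BddBelow s) : cyclicSucc s = 1 := by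
  rw [cyclicSucc, if_pos hb, if_pos ⟨1, h1, mem_Ioi.2 one_pos⟩]
  exact IsLeast.csInf_eq ⟨⟨h1, mem_Ioi.2 one_pos⟩, fun n hn => hn.2⟩

lemma bddAbove_sub_preimage_iff (k : ℤ) : BddAbove ((k - ·) ⁻¹' s) ↔ BddBelow s := by
  have : (k - ·) ⁻¹' s = (OrderIso.subRight k) ⁻¹' (-s) := by ext n; simp
  rw [this, OrderIso.bddAbove_preimage, bddAbove_neg]

lemma bddBelow_sub_preimage_iff (k : ℤ) : BddBelow ((k - ·) ⁻¹' s) ↔ BddAbove s := by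
  have : (k - ·) ⁻¹' s = (OrderIso.subRight k) ⁻¹' (-s) := by ext n; simp
  rw [this, OrderIso.bddBelow_preimage, bddBelow_neg]

/-- `(k - ·) ⁻¹' s` is `s` seen from `k` with time reversed, so this says that `0` is the cyclic
predecessor of `cyclicSucc s`. -/
lemma cyclicSucc_sub_preimage (h0 : 0 ∈ s) :
    cyclicSucc ((cyclicSucc s - ·) ⁻¹' s) = cyclicSucc s := by
  set k := cyclicSucc s
  set t := (k - ·) ⁻¹' s
  have hbt : (BddAbove t ↔ BddBelow t) ↔ (BddAbove s ↔ BddBelow s) := by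
    rw [bddAbove_sub_preimage_iff, bddBelow_sub_preimage_iff]
    exact Iff.comm
  by_cases hb : BddAbove s ↔ BddBelow s
  swap
  · exact (if_neg (hbt.not.2 hb)).trans (if_neg hb).symm
  have hk : k ∈ t := by simpa [t] using h0
  rcases cyclicSucc_spec h0 hb with ⟨⟨-, hk0⟩, hmin⟩ | ⟨hle, -, hmin⟩
  · rw [cyclicSucc, if_pos (hbt.2 hb), if_pos ⟨k, hk, hk0⟩]
    refine IsLeast.csInf_eq ⟨⟨hk, hk0⟩, fun n ⟨(hn : k - n ∈ s), hn0⟩ => ?_⟩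
    by_contra! hnk
    have : k ≤ k - n := hmin ⟨hn, sub_pos.2 hnk⟩
    simp only [mem_Ioi] at hn0
    omega
  · have hpos : ¬(t ∩ Ioi 0).Nonempty := fun ⟨n, (hn : k - n ∈ s), hn0⟩ => by
      have : k ≤ k - n := hmin hn
      simp only [mem_Ioi] at hn0
      omega
    rw [cyclicSucc, if_pos (hbt.2 hb), if_neg hpos]
    refine IsLeast.csInf_eq ⟨hk, fun n (hn : k - n ∈ s) => ?_⟩
    have : k - n ≤ 0 := hle hn
    omega

end

variable {X : Type*} [MeasurableSpace X] {s : X → Set ℤ}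

lemma measurable_isLeast (hs : ∀ n, Measurable fun x => n ∈ s x) (n : ℤ) :
    Measurable fun x => IsLeast (s x) n :=
  (hs n).and (Measurable.forall fun m => (hs m).imp measurable_const)

lemma measurable_csInf (hs : ∀ n, Measurable fun x => n ∈ s x) :
    Measurable fun x => sInf (s x) := by
  refine measurable_to_countable' fun n => ?_
  -- `sInf` on `ℤ` is `0` on sets without a least element
  have : (fun x => sInf (s x)) ⁻¹' {n} =
      {x | IsLeast (s x) n ∨ (n = 0 ∧ ∀ m, ¬IsLeast (s x) m)} := by
    ext x
    simp only [mem_preimage, mem_singleton_iff, mem_ofPred_eq]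
    by_cases h : ∃ m, IsLeast (s x) m
    · obtain ⟨m, hm⟩ := h
      rw [hm.csInf_eq]
      exact ⟨fun h => Or.inl (h ▸ hm), fun h => h.elim hm.unique fun h => (h.2 m hm).elim⟩
    · push Not at h
      have h0 : sInf (s x) = 0 := dif_neg fun h' => h _ (isLeast_csInf h'.1 h'.2)
      simp [h0, h, eq_comm]
  rw [this]
  exact measurableSet_setOfPred.2 ((measurable_isLeast hs n).or
    (measurable_const.and (Measurable.forall fun m => (measurable_isLeast hs m).not)))

lemma measurable_bddAbove (hs : ∀ n, Measurable fun x => n ∈ s x) :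
    Measurable fun x => BddAbove (s x) := by
  simp only [bddAbove_def]
  exact Measurable.exists fun N => Measurable.forall fun n => (hs n).imp measurable_const

lemma measurable_bddBelow (hs : ∀ n, Measurable fun x => n ∈ s x) :
    Measurable fun x => BddBelow (s x) := by
  simp only [bddBelow_def]
  exact Measurable.exists fun N => Measurable.forall fun n => (hs n).imp measurable_const

lemma measurable_cyclicSucc (hs : ∀ n, Measurable fun x => n ∈ s x) :
    Measurable fun x => cyclicSucc (s x) := by
  have hpos : ∀ n, Measurable fun x => n ∈ s x ∩ Ioi 0 := fun n => (hs n).and measurable_const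
  classical
  refine Measurable.ite ?_ (Measurable.ite ?_ (measurable_csInf hpos) (measurable_csInf hs))
    measurable_const
  · exact measurableSet_setOfPred.2 ((measurable_bddAbove hs).iff (measurable_bddBelow hs))
  · exact measurableSet_setOfPred.2 (Measurable.exists hpos)

end Int

section ReturnTimes

variable {X : Type*} [MeasurableSpace X] {E : X → X → Prop} {S : X ≃ᵐ X} {x : X}

variable (E S) in
def returnTimes (x : X) : Set ℤ := {n | E ((S ^ n) x) x}

lemma zero_mem_returnTimes (hE : ∀ x, E x x) (x : X) : 0 ∈ returnTimes E S x := hE x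

lemma returnTimes_zpow_apply (hE : Equivalence E) {k : ℤ} (hk : k ∈ returnTimes E S x) :
    returnTimes E S ((S ^ k) x) = (· + k) ⁻¹' returnTimes E S x := by
  ext n
  simp only [returnTimes, mem_preimage, mem_ofPred_eq, ← MeasurableEquiv.mul_apply, ← zpow_add]
  exact ⟨fun h => hE.trans h hk, fun h => hE.trans h (hE.symm hk)⟩

lemma returnTimes_inv : returnTimes E S⁻¹ x = -returnTimes E S x := by
  ext n
  simp [returnTimes, inv_zpow']

lemma measurable_mem_returnTimes (hE : MeasurableSet {p : X × X | E p.1 p.2}) (n : ℤ) :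
    Measurable fun x => n ∈ returnTimes E S x :=
  measurableSet_setOfPred.1 (hE.preimage ((S ^ n).measurable.prodMk measurable_id))

end ReturnTimes

section CyclicReturn

variable {X : Type*} [MeasurableSpace X] {E : X → X → Prop} {S : X ≃ᵐ X} {x : X}

variable (E S) in
noncomputable def cyclicReturn (x : X) : X := (S ^ Int.cyclicSucc (returnTimes E S x)) x

lemma rel_cyclicReturn (hE : ∀ x, E x x) (x : X) : E (cyclicReturn E S x) x :=
  Int.cyclicSucc_mem (zero_mem_returnTimes hE x)

lemma cyclicReturn_inv_cyclicReturn (hE : Equivalence E) (x : X) :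
    cyclicReturn E S⁻¹ (cyclicReturn E S x) = x := by
  set k := Int.cyclicSucc (returnTimes E S x)
  have h0 := zero_mem_returnTimes hE.refl (S := S) x
  have hk : returnTimes E S⁻¹ ((S ^ k) x) = (k - ·) ⁻¹' returnTimes E S x := by
    rw [returnTimes_inv, returnTimes_zpow_apply hE (Int.cyclicSucc_mem h0)]
    ext n; simp [k, sub_eq_neg_add]
  rw [cyclicReturn, cyclicReturn, hk, Int.cyclicSucc_sub_preimage h0, inv_zpow',
    ← MeasurableEquiv.mul_apply, ← zpow_add, neg_add_cancel, zpow_zero,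
    MeasurableEquiv.one_apply]

lemma measurable_cyclicReturn (hE : MeasurableSet {p : X × X | E p.1 p.2}) :
    Measurable (cyclicReturn E S) :=
  S.measurable_zpow_apply (Int.measurable_cyclicSucc (measurable_mem_returnTimes hE))

lemma cyclicReturn_eq_of_rel (hb : BddAbove (returnTimes E S x) ↔ BddBelow (returnTimes E S x))
    (hx : E (S x) x) : cyclicReturn E S x = S x := by
  rw [cyclicReturn, Int.cyclicSucc_eq_one (by simpa [returnTimes] using hx) hb, zpow_one]

variable (S) in
noncomputable def cyclicReturnEquiv (hE : Equivalence E)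
    (hmE : MeasurableSet {p : X × X | E p.1 p.2}) : X ≃ᵐ X where
  toFun := cyclicReturn E S
  invFun := cyclicReturn E S⁻¹
  left_inv := cyclicReturn_inv_cyclicReturn hE
  right_inv x := by simpa using cyclicReturn_inv_cyclicReturn hE (S := S⁻¹) x
  measurable_toFun := measurable_cyclicReturn hmE
  measurable_invFun := measurable_cyclicReturn hmE

end CyclicReturn

section Partition

variable {X : Type*} [MeasurableSpace X] {f : X → X}

lemma exists_partition_eqOn_id_or_disjoint_image [MeasurableSpace.CountablySeparated X]
    (hf : Measurable f) :
    ∃ P : Option (ℕ × Bool) → Set X, (∀ p, MeasurableSet (P p)) ∧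
      Pairwise (Disjoint on P) ∧ (⋃ p, P p) = univ ∧
      ∀ p, EqOn f id (P p) ∨ Disjoint (P p) (f '' P p) := by
  obtain ⟨g, hg, hg_inj⟩ :=
    MeasurableSpace.measurable_injection_nat_bool_of_countablySeparated X
  -- on the piece `(i, b)` the bit `i` of `g` is `b` at `x` but not at `f x`, so the piece
  -- misses its image; `i` is the first bit where `g x` and `g (f x)` differ, so pieces are disjoint
  have hgi : ∀ i, Measurable fun x => g x i := fun i => (measurable_pi_apply i).comp hg
  let P : Option (ℕ × Bool) → Set X
    | none => {x | ∀ i, g x i = g (f x) i}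
    | some (i, b) => {x | g x i = b ∧ g (f x) i ≠ b ∧ ∀ j < i, g x j = g (f x) j}
  refine ⟨P, ?_, ?_, ?_, ?_⟩
  · rintro (_ | ⟨i, b⟩)
    · exact measurableSet_setOfPred.2 (Measurable.forall fun i => (hgi i).eq ((hgi i).comp hf))
    · refine measurableSet_setOfPred.2 (((hgi i).eq measurable_const).and
        ((((hgi i).comp hf).eq measurable_const).not.and
        (Measurable.forall fun j => measurable_const.imp ((hgi j).eq ((hgi j).comp hf)))))
  · rintro (_ | ⟨i, b⟩) (_ | ⟨i', b'⟩) hne <;> refine disjoint_left.2 fun x hx hx' => ?_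
    · exact hne rfl
    · exact hx'.2.1 (hx i' ▸ hx'.1)
    · exact hx.2.1 (hx' i ▸ hx.1)
    · rcases lt_trichotomy i i' with h | rfl | h
      · exact hx.2.1 (hx'.2.2 i h ▸ hx.1)
      · exact hne (by rw [← hx.1, ← hx'.1])
      · exact hx'.2.1 (hx.2.2 i' h ▸ hx'.1)
  · refine eq_univ_of_forall fun x => ?_
    by_cases hdiff : ∃ i, g x i ≠ g (f x) i
    · exact mem_iUnion.2 ⟨some (Nat.find hdiff, g x (Nat.find hdiff)), rfl,
        Ne.symm (Nat.find_spec hdiff), fun j hj => not_not.1 (Nat.find_min hdiff hj)⟩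
    · exact mem_iUnion.2 ⟨none, show ∀ i, _ by simpa using hdiff⟩
  · rintro (_ | ⟨i, b⟩)
    · exact Or.inl fun x hx => (hg_inj (funext hx)).symm
    · exact Or.inr (disjoint_left.2 fun _ hy ⟨x, hx, hxy⟩ => hx.2.1 (hxy ▸ hy.1))

end Partition

section FullGroupInvariance

variable {X : Type*} [MeasurableSpace X] [StandardBorelSpace X] {μ : Measure X} {f : X → X}

lemma exists_swap_image (hf : Measurable f) {D : Set X} (hD : MeasurableSet D)
    (hinj : InjOn f D) (hdisj : Disjoint D (f '' D)) :
    ∃ T : X ≃ᵐ X, (∀ x ∈ D, T x = f x) ∧ (∀ x ∈ D, T (f x) = x) ∧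
      ∀ x ∉ D, x ∉ f '' D → T x = x := by
  classical
  have := hD.standardBorel
  have he : MeasurableEmbedding (D.domRestrict f) :=
    (hf.comp measurable_subtype_coe).measurableEmbedding (injOn_iff_injective.1 hinj)
  set τ := D.piecewise f (extend (D.domRestrict f) Subtype.val id)
  have hτ_mem : ∀ x ∈ D, τ x = f x := fun x hx => piecewise_eq_of_mem _ _ _ hx
  have hτ_img : ∀ x ∈ D, τ (f x) = x := fun x hx => by
    have hfx : f x ∉ D := hdisj.notMem_of_mem_right (mem_image_of_mem f hx)
    exact (piecewise_eq_of_notMem _ _ _ hfx).trans (he.injective.extend_apply _ _ ⟨x, hx⟩)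
  have hτ_out : ∀ x ∉ D, x ∉ f '' D → τ x = x := fun x hx hx' =>
    (piecewise_eq_of_notMem _ _ _ hx).trans
      (extend_apply' _ _ _ fun ⟨d, hd⟩ => hx' ⟨d, d.2, hd⟩)
  have hτ : Involutive τ := by
    intro x
    by_cases hx : x ∈ D
    · rw [hτ_mem x hx, hτ_img x hx]
    by_cases hx' : x ∈ f '' D
    · obtain ⟨d, hd, rfl⟩ := hx'
      rw [hτ_img d hd, hτ_mem d hd]
    · rw [hτ_out x hx hx', hτ_out x hx hx']
  have hτm : Measurable τ :=
    hf.piecewise hD (he.measurable_extend measurable_subtype_coe measurable_id)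
  exact ⟨⟨hτ.toPerm τ, hτm, hτm⟩, hτ_mem, hτ_img, hτ_out⟩

lemma measure_image_iUnion_of_injOn {ι : Type*} [Countable ι] (hf : Measurable f)
    {P : ι → Set X} (hPm : ∀ i, MeasurableSet (P i)) (hdisj : Pairwise (Disjoint on P))
    (hinj : InjOn f (⋃ i, P i)) (h : ∀ i, μ (f '' P i) = μ (P i)) :
    μ (f '' ⋃ i, P i) = μ (⋃ i, P i) := by
  have hsub : ∀ i, P i ⊆ ⋃ i, P i := subset_iUnion P
  have hdisj' : Pairwise (Disjoint on fun i => f '' P i) := fun i j hij => by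
    rw [onFun, disjoint_iff_inter_eq_empty, ← hinj.image_inter (hsub i) (hsub j),
      disjoint_iff_inter_eq_empty.1 (hdisj hij), image_empty]
  rw [image_iUnion, measure_iUnion hdisj' fun i =>
      (hPm i).image_of_measurable_injOn hf (hinj.mono (hsub i)),
    measure_iUnion hdisj hPm]
  exact tsum_congr h

variable {E : X → X → Prop} (hrefl : ∀ x, E x x) (hsymm : ∀ {x y}, E x y → E y x)
  (hfull : ∀ T : X ≃ᵐ X, (∀ x, E (T x) x) → MeasurePreserving T μ μ)
include hrefl hsymm hfull

lemma measure_image_eq_of_disjoint_image (hf : Measurable f) {D : Set X}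
    (hD : MeasurableSet D) (hinj : InjOn f D) (hfE : ∀ x ∈ D, E (f x) x)
    (hdisj : Disjoint D (f '' D)) : μ (f '' D) = μ D := by
  obtain ⟨T, hT_mem, hT_img, hT_out⟩ := exists_swap_image hf hD hinj hdisj
  have hTE : ∀ x, E (T x) x := by
    intro x
    by_cases hx : x ∈ D
    · rw [hT_mem x hx]; exact hfE x hx
    by_cases hx' : x ∈ f '' D
    · obtain ⟨d, hd, rfl⟩ := hx'
      rw [hT_img d hd]; exact hsymm (hfE d hd)
    · rw [hT_out x hx hx']; exact hrefl x
  rw [← image_congr hT_mem, T.image_eq_preimage_symm]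
  exact ((hfull T hTE).symm T).measure_preimage_equiv D

lemma measure_image_eq_of_rel (hf : Measurable f) {B : Set X} (hB : MeasurableSet B)
    (hinj : InjOn f B) (hfE : ∀ x ∈ B, E (f x) x) : μ (f '' B) = μ B := by
  obtain ⟨P, hPm, hdisj, hcover, hP⟩ := exists_partition_eqOn_id_or_disjoint_image hf
  have hB' : B = ⋃ p, B ∩ P p := by rw [← inter_iUnion, hcover, inter_univ]
  rw [hB']
  refine measure_image_iUnion_of_injOn hf (fun p => hB.inter (hPm p))
    (fun p q hpq => (hdisj hpq).mono inter_subset_right inter_subset_right) (hB' ▸ hinj)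
    fun p => ?_
  rcases hP p with hid | hdisj_image
  · rw [image_congr (hid.mono inter_subset_right), image_id]
  · exact measure_image_eq_of_disjoint_image hrefl hsymm hfull hf (hB.inter (hPm p))
      (hinj.mono inter_subset_left) (fun x hx => hfE x hx.1)
      (hdisj_image.mono inter_subset_right (image_mono inter_subset_right))

end FullGroupInvariance

section FirstReturn

variable {X : Type*} [MeasurableSpace X] {E : X → X → Prop} {S : X ≃ᵐ X} {x : X}

variable (E S) in
noncomputable def firstReturnTime (x : X) : ℤ := sInf (returnTimes E S x ∩ Ioi 0)

variable (E S) in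
noncomputable def firstReturn (x : X) : X := (S ^ firstReturnTime E S x) x

lemma rel_firstReturn (hE : ∀ x, E x x) (x : X) : E (firstReturn E S x) x := by
  by_cases h : (returnTimes E S x ∩ Ioi 0).Nonempty
  · exact (Int.isLeast_csInf_inter_Ioi h).1.1
  · have : firstReturnTime E S x = 0 := by
      rw [firstReturnTime, not_nonempty_iff_eq_empty.1 h, Int.csInf_empty]
    rw [firstReturn, this]
    exact zero_mem_returnTimes hE x

lemma rel_iterate_firstReturn (hE : Equivalence E) (k : ℕ) (x : X) :
    E ((firstReturn E S)^[k] x) x := by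
  induction k with
  | zero => exact hE.refl x
  | succ k ih => rw [iterate_succ_apply']; exact hE.trans (rel_firstReturn hE.refl _) ih

lemma measurable_firstReturn (hE : MeasurableSet {p : X × X | E p.1 p.2}) :
    Measurable (firstReturn E S) :=
  S.measurable_zpow_apply
    (Int.measurable_csInf fun n => (measurable_mem_returnTimes hE n).and measurable_const)

section Unbounded

variable (hE : Equivalence E) (hx : ¬BddAbove (returnTimes E S x))
include hx

lemma isLeast_firstReturnTime :
    IsLeast (returnTimes E S x ∩ Ioi 0) (firstReturnTime E S x) :=
  let ⟨n, hn, hn0⟩ := not_bddAbove_iff.1 hx 0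
  Int.isLeast_csInf_inter_Ioi ⟨n, hn, hn0⟩

include hE

lemma returnTimes_firstReturn :
    returnTimes E S (firstReturn E S x) = (· + firstReturnTime E S x) ⁻¹' returnTimes E S x :=
  returnTimes_zpow_apply hE (isLeast_firstReturnTime hx).1.1

lemma not_bddAbove_returnTimes_firstReturn :
    ¬BddAbove (returnTimes E S (firstReturn E S x)) := by
  rw [returnTimes_firstReturn hE hx]
  exact fun h => hx ((OrderIso.addRight (firstReturnTime E S x)).bddAbove_preimage.1 h)

lemma neg_firstReturnTime_mem :
    -firstReturnTime E S x ∈ returnTimes E S (firstReturn E S x) := by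
  rw [returnTimes_firstReturn hE hx, mem_preimage, neg_add_cancel]
  exact zero_mem_returnTimes hE.refl x

end Unbounded

lemma mapsTo_firstReturn (hE : Equivalence E) :
    MapsTo (firstReturn E S) {x | ¬BddAbove (returnTimes E S x)}
      {x | ¬BddAbove (returnTimes E S x)} :=
  fun _ hx => not_bddAbove_returnTimes_firstReturn hE hx

lemma injOn_firstReturn (hE : Equivalence E) :
    InjOn (firstReturn E S) {x | ¬BddAbove (returnTimes E S x)} := by
  -- if `x, y` have the same first return `z`, then `-firstReturnTime` of either is the
  -- largest negative return time of `z`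
  have hle : ∀ x y, ¬BddAbove (returnTimes E S x) → ¬BddAbove (returnTimes E S y) →
      firstReturn E S x = firstReturn E S y →
      firstReturnTime E S y ≤ firstReturnTime E S x := by
    intro x y hx hy hxy
    by_contra! hlt
    have h := neg_firstReturnTime_mem hE hx
    rw [hxy, returnTimes_firstReturn hE hy] at h
    have : firstReturnTime E S y ≤ -firstReturnTime E S x + firstReturnTime E S y :=
      (isLeast_firstReturnTime hy).2 ⟨h, by simp only [mem_Ioi]; omega⟩
    have := (isLeast_firstReturnTime hx).1.2
    simp only [mem_Ioi] at this
    omega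
  intro x hx y hy hxy
  have hρ := le_antisymm (hle y x hy hx hxy.symm) (hle x y hx hy hxy)
  rw [firstReturn, firstReturn, hρ] at hxy
  exact (S ^ _).injective hxy

variable (E S) in
def cellMinsUnboundedAbove : Set X :=
  {x | IsLeast (returnTimes E S x) 0 ∧ ¬BddAbove (returnTimes E S x)}

lemma measurableSet_cellMinsUnboundedAbove (hmE : MeasurableSet {p : X × X | E p.1 p.2}) :
    MeasurableSet (cellMinsUnboundedAbove E S) :=
  measurableSet_setOfPred.2 ((Int.measurable_isLeast (measurable_mem_returnTimes hmE) 0).and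
    (Int.measurable_bddAbove (measurable_mem_returnTimes hmE)).not)

lemma pairwise_disjoint_image_iterate_firstReturn (hE : Equivalence E) :
    Pairwise (Disjoint on fun k => (firstReturn E S)^[k] '' cellMinsUnboundedAbove E S) := by
  set R := firstReturn E S
  refine (pairwise_disjoint_on _).2 fun i j hij => disjoint_left.2 ?_
  rintro _ ⟨x, hx, rfl⟩ ⟨y, hy, hyx⟩
  obtain ⟨d, rfl⟩ := Nat.exists_eq_add_of_lt hij
  rw [add_assoc, iterate_add_apply] at hyx
  have hy' := (mapsTo_firstReturn hE).iterate d hy.2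
  have hxy : R (R^[d] y) = x := by
    rw [← iterate_succ_apply' R d y]
    exact (injOn_firstReturn hE).iterate (mapsTo_firstReturn hE) i
      ((mapsTo_firstReturn hE).iterate _ hy.2) hx.2 hyx
  -- `x` gets a negative return time, though it is the least point of its cell
  have hneg : -firstReturnTime E S (R^[d] y) ∈ returnTimes E S x := by
    rw [← hxy]; exact neg_firstReturnTime_mem hE hy'
  have hpos : 0 < firstReturnTime E S (R^[d] y) := (isLeast_firstReturnTime hy').1.2
  have := hx.1.2 hneg
  omega

end FirstReturn

section TwoSidedCells

variable {X : Type*} [MeasurableSpace X] [StandardBorelSpace X] {μ : Measure X}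
  [IsFiniteMeasure μ] {E : X → X → Prop} {S : X ≃ᵐ X}

variable (hE : Equivalence E) (hmE : MeasurableSet {p : X × X | E p.1 p.2})
  (hfull : ∀ T : X ≃ᵐ X, (∀ x, E (T x) x) → MeasurePreserving T μ μ)
include hE hmE hfull

lemma measure_cellMinsUnboundedAbove : μ (cellMinsUnboundedAbove E S) = 0 := by
  set B := cellMinsUnboundedAbove E S
  set R := firstReturn E S
  have hBm : MeasurableSet B := measurableSet_cellMinsUnboundedAbove hmE
  have hRm : Measurable R := measurable_firstReturn hmE
  have hinj : ∀ k, InjOn R^[k] B := fun k =>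
    ((injOn_firstReturn hE).iterate (mapsTo_firstReturn hE) k).mono fun x hx => hx.2
  have hmeas : ∀ k, μ (R^[k] '' B) = μ B := fun k =>
    measure_image_eq_of_rel hE.refl hE.symm hfull (hRm.iterate k) hBm (hinj k)
      fun x _ => rel_iterate_firstReturn hE k x
  by_contra hB0
  obtain ⟨i, j, hij, hne⟩ := exists_nonempty_inter_of_measure_univ_lt_tsum_measure μ
    (fun k => (hBm.image_of_measurable_injOn (hRm.iterate k) (hinj k)).nullMeasurableSet)
    (by simpa only [hmeas, ENNReal.tsum_const_eq_top_of_ne_zero hB0] using measure_lt_top μ univ)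
  exact hne.ne_empty
    (disjoint_iff_inter_eq_empty.1 (pairwise_disjoint_image_iterate_firstReturn hE hij))

lemma ae_bddAbove_of_bddBelow (hS : MeasurePreserving S μ μ) :
    ∀ᵐ x ∂μ, BddBelow (returnTimes E S x) → BddAbove (returnTimes E S x) := by
  -- shifting a cell that is bounded below to its least element lands in the null set above
  rw [ae_iff]
  refine measure_mono_null (t := ⋃ m : ℤ, ⇑(S ^ m) ⁻¹' cellMinsUnboundedAbove E S) ?_
    (measure_iUnion_null fun m => ?_)
  · intro x hx
    obtain ⟨hb, hna⟩ := Classical.not_imp.1 hx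
    have hm := Int.isLeast_csInf ⟨0, zero_mem_returnTimes hE.refl x⟩ hb
    refine mem_iUnion.2 ⟨sInf (returnTimes E S x), ?_⟩
    rw [mem_preimage, cellMinsUnboundedAbove, mem_ofPred_eq, returnTimes_zpow_apply hE hm.1]
    refine ⟨⟨by simpa using hm.1, fun n hn => ?_⟩,
      fun h => hna ((OrderIso.addRight (sInf (returnTimes E S x))).bddAbove_preimage.1 h)⟩
    have : sInf (returnTimes E S x) ≤ n + sInf (returnTimes E S x) := hm.2 hn
    omega
  · rw [(MeasurableEquiv.measurePreserving_zpow hS m).measure_preimage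
      (measurableSet_cellMinsUnboundedAbove hmE).nullMeasurableSet]
    exact measure_cellMinsUnboundedAbove hE hmE hfull

lemma ae_bddAbove_iff_bddBelow (hS : MeasurePreserving S μ μ) :
    ∀ᵐ x ∂μ, BddAbove (returnTimes E S x) ↔ BddBelow (returnTimes E S x) := by
  filter_upwards [ae_bddAbove_of_bddBelow hE hmE hfull hS,
    ae_bddAbove_of_bddBelow hE hmE hfull (S := S⁻¹) (hS.symm S)] with x h h'
  rw [returnTimes_inv, bddAbove_neg, bddBelow_neg] at h'
  exact ⟨h', h⟩

end TwoSidedCells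

/-- `1 - φ_E(S)` equals the uniform distance `δ_u(S, [E])` from `S` to the full
group `[E]`, and the infimum is attained. -/
theorem one_sub_phiE_eq_dist_to_fullGroup
    {X : Type} [MeasurableSpace X] [StandardBorelSpace X]
    (μ : Measure X) [IsProbabilityMeasure μ]
    (E : X → X → Prop) (hE : IsCountableMPER μ E)
    (S : X ≃ᵐ X) (hS : MeasurePreserving S μ μ) :
    (∃ T : X ≃ᵐ X, MeasurePreserving T μ μ ∧ (∀ᵐ x ∂μ, E (T x) x) ∧
      (μ {x | S x ≠ T x}).toReal = 1 - (μ {x | E (S x) x}).toReal) ∧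
    (∀ T : X ≃ᵐ X, MeasurePreserving T μ μ → (∀ᵐ x ∂μ, E (T x) x) →
      1 - (μ {x | E (S x) x}).toReal ≤ (μ {x | S x ≠ T x}).toReal) := by
  obtain ⟨hEq, hmE, -, hfull⟩ := hE
  have hA : MeasurableSet {x | E (S x) x} := hmE.preimage (S.measurable.prodMk measurable_id)
  have hcompl : 1 - (μ {x | E (S x) x}).toReal = μ.real {x | E (S x) x}ᶜ :=
    (probReal_compl_eq_one_sub hA).symm
  let T := cyclicReturnEquiv S hEq hmE
  have hTE : ∀ x, E (T x) x := rel_cyclicReturn hEq.refl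
  refine ⟨⟨T, hfull T hTE, ae_of_all μ hTE, ?_⟩, fun T' _ hT'E => ?_⟩
  · have : {x | S x ≠ T x} =ᵐ[μ] {x | E (S x) x}ᶜ := by
      filter_upwards [ae_bddAbove_iff_bddBelow hEq hmE hfull hS] with x hx
      refine propext ⟨fun hne hSx => hne (cyclicReturn_eq_of_rel hx hSx).symm,
        fun hSx hST => hSx ?_⟩
      show E (S x) x
      rw [hST]
      exact hTE x
    rw [hcompl, measureReal_def, measure_congr this]
    rfl
  · rw [hcompl, measureReal_def]
    refine ENNReal.toReal_mono (measure_ne_top μ _) (measure_mono_ae ?_)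
    filter_upwards [hT'E] with x hx hSx hST
    exact hSx (show E (S x) x by rw [hST]; exact hx)
end

section
/- Let Γ be a countable group with a measure-preserving action on a standard probability space (X,μ) and let F = E^X_Γ be the orbit equivalence relation. Let E be any countable, measure-preserving equivalence relation on (X,μ) and let ε > 0. If φ_E(γ) ≥ 1 − ε for every γ ∈ Γ (identifying γ with the automorphism x ↦ γ·x), then φ_E(S) ≥ 1 − 4ε for every S ∈ [F]. -/
open MeasureTheory Filter Topology

/-!
For a finitely supported probability vector `α` on `Γ`, let `q x` be the `α`-mass of those `i`
with `i • x` in the `E`-class of `x`; the hypothesis gives `∫ q ≥ 1 - ε`. The energy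
`∑ i j, α i * α j * μ {x | E (i • x) (j • x)}` integrates the pointwise sum over `E`-classes of the
squared class masses, so it is a positive semidefinite quadratic form in `α`, invariant under right
translation of `α`. By the parallelogram law an almost minimiser `α` is therefore almost invariant:
for every `γ`, `q (γ • x)` is close in `L²` to the `α`-mass of those `i` with `i • x` in the class
of `γ • x`. Where `S x = γ • x` is not `E`-related to `x`, the classes of `x` and `γ • x` are
disjoint, so `q x + q (S x) ≲ 1` there; as `∫ q ∘ S = ∫ q ≥ 1 - ε`, such points have measure at
most `2ε`.
-/

section Pairing

variable {ι ι' κ : Type*}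

noncomputable def kernelPairing (k : ι → ι → ℝ) : (ι →₀ ℝ) →ₗ[ℝ] (ι →₀ ℝ) →ₗ[ℝ] ℝ :=
  Finsupp.linearCombination ℝ fun i => Finsupp.linearCombination ℝ (k i)

theorem kernelPairing_apply (k : ι → ι → ℝ) (β β' : ι →₀ ℝ) :
    kernelPairing k β β' =
      Finsupp.linearCombination ℝ (fun i => Finsupp.linearCombination ℝ (k i) β') β := by
  simp [kernelPairing, Finsupp.linearCombination_apply, LinearMap.finsupp_sum_apply]

theorem kernelPairing_domLCongr (k : ι' → ι' → ℝ) (e : ι ≃ ι') (β β' : ι →₀ ℝ) :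
    kernelPairing k (Finsupp.domLCongr (R := ℝ) e β) (Finsupp.domLCongr (R := ℝ) e β') =
      kernelPairing (fun i j => k (e i) (e j)) β β' := by
  simp only [kernelPairing_apply, Finsupp.domLCongr_apply, Finsupp.domCongr_apply,
    Finsupp.linearCombination_equivMapDomain]
  rfl

open Classical in
theorem linearCombination_ite_eq_mapDomain (g : ι → κ) (β : ι →₀ ℝ) (q : κ) :
    Finsupp.linearCombination ℝ (fun i => if g i = q then (1 : ℝ) else 0) β =
      Finsupp.mapDomain g β q := by
  simp [Finsupp.linearCombination_apply, Finsupp.mapDomain, Finsupp.sum_apply,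
    Finsupp.single_apply]

open Classical in
theorem kernelPairing_ite_eq_sum_sq (g : ι → κ) (β : ι →₀ ℝ) :
    kernelPairing (fun i j => if g i = g j then (1 : ℝ) else 0) β β =
      (Finsupp.mapDomain g β).sum fun _ a => a ^ 2 := by
  have hrow (i : ι) :
      Finsupp.linearCombination ℝ (fun j => if g i = g j then (1 : ℝ) else 0) β =
        Finsupp.mapDomain g β (g i) := by
    simp_rw [eq_comm (a := g i)]
    exact linearCombination_ite_eq_mapDomain g β (g i)
  rw [Finsupp.sum_congr (g1 := fun _ a => a ^ 2)
      (g2 := fun q a => a * Finsupp.mapDomain g β q) fun q _ => sq _,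
    Finsupp.sum_mapDomain_index (fun _ => zero_mul _) fun _ _ _ => add_mul _ _ _]
  simp [kernelPairing_apply, hrow, Finsupp.linearCombination_apply]

open Classical in
theorem sq_linearCombination_ite_le_kernelPairing (g : ι → κ) (β : ι →₀ ℝ) (j : ι) :
    Finsupp.linearCombination ℝ (fun i => if g i = g j then (1 : ℝ) else 0) β ^ 2 ≤
      kernelPairing (fun i j => if g i = g j then (1 : ℝ) else 0) β β := by
  rw [linearCombination_ite_eq_mapDomain, kernelPairing_ite_eq_sum_sq]
  by_cases hj : g j ∈ (Finsupp.mapDomain g β).support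
  · exact Finset.single_le_sum (f := fun q => Finsupp.mapDomain g β q ^ 2)
      (fun q _ => sq_nonneg _) hj
  · rw [Finsupp.notMem_support_iff.1 hj, sq, zero_mul]
    exact Finset.sum_nonneg fun q _ => sq_nonneg _

end Pairing

/-- Parallelogram law: `B (a - b) (a - b) = 2 B a a + 2 B b b - 4 B m m`, `m` the midpoint. -/
theorem LinearMap.apply_sub_sub_le_of_forall_le {V : Type*} [AddCommGroup V] [Module ℝ V]
    (B : V →ₗ[ℝ] V →ₗ[ℝ] ℝ) {C : Set V} (hC : Convex ℝ C) {m θ : ℝ}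
    (hm : ∀ c ∈ C, m ≤ B c c) {a b : V} (ha : a ∈ C) (hb : b ∈ C)
    (haθ : B a a ≤ m + θ) (hbθ : B b b ≤ m + θ) :
    B (a - b) (a - b) ≤ 4 * θ := by
  have hmid := hm _ (hC ha hb (by norm_num : (0 : ℝ) ≤ 2⁻¹) (by norm_num : (0 : ℝ) ≤ 2⁻¹)
    (by norm_num))
  simp only [map_add, map_sub, map_smul, LinearMap.add_apply, LinearMap.sub_apply,
    LinearMap.smul_apply, smul_eq_mul] at hmid ⊢
  linarith

section ProbVectors

variable {ι ι' : Type*}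

def probVectors (ι : Type*) : Set (ι →₀ ℝ) :=
  {α | (∀ i, 0 ≤ α i) ∧ Finsupp.linearCombination ℝ (fun _ => (1 : ℝ)) α = 1}

theorem convex_probVectors : Convex ℝ (probVectors ι) := by
  rintro α ⟨hα0, hα1⟩ β ⟨hβ0, hβ1⟩ a b ha hb hab
  refine ⟨fun i => ?_, ?_⟩
  · simp only [Finsupp.add_apply, Finsupp.smul_apply, smul_eq_mul]
    exact add_nonneg (mul_nonneg ha (hα0 i)) (mul_nonneg hb (hβ0 i))
  · simp [hα1, hβ1, hab]

theorem single_one_mem_probVectors (i : ι) : Finsupp.single i 1 ∈ probVectors ι :=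
  ⟨Finsupp.single_nonneg.2 zero_le_one, by simp⟩

theorem domLCongr_mem_probVectors (e : ι ≃ ι') {α : ι →₀ ℝ} (hα : α ∈ probVectors ι) :
    Finsupp.domLCongr (R := ℝ) e α ∈ probVectors ι' := by
  refine ⟨fun i => ?_, ?_⟩
  · simpa [Finsupp.domLCongr_apply] using hα.1 (e.symm i)
  · simpa [Finsupp.linearCombination_equivMapDomain, Function.comp_def] using hα.2

theorem linearCombination_mono {α : ι →₀ ℝ} (hα : ∀ i, 0 ≤ α i) {v w : ι → ℝ}
    (hvw : ∀ i, v i ≤ w i) :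
    Finsupp.linearCombination ℝ v α ≤ Finsupp.linearCombination ℝ w α := by
  simp only [Finsupp.linearCombination_apply, Finsupp.sum, smul_eq_mul]
  exact Finset.sum_le_sum fun i _ => mul_le_mul_of_nonneg_left (hvw i) (hα i)

theorem le_linearCombination_of_mem_probVectors {α : ι →₀ ℝ} (hα : α ∈ probVectors ι)
    {c : ℝ} {w : ι → ℝ} (hw : ∀ i, c ≤ w i) : c ≤ Finsupp.linearCombination ℝ w α := by
  have hc : Finsupp.linearCombination ℝ (fun _ => c) α = c := by
    have := congrArg (c * ·) hα.2
    simpa [Finsupp.linearCombination_apply, Finsupp.sum, Finset.mul_sum, mul_comm] using this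
  exact hc.symm.trans_le (linearCombination_mono hα.1 hw)

end ProbVectors

section ClassMass

variable {X Γ : Type*} [Group Γ] [MulAction Γ X] (E : X → X → Prop)

noncomputable def classKernel (x : X) (i j : Γ) : ℝ :=
  {y : X | E (i • y) (j • y)}.indicator 1 x

noncomputable def classMass (α : Γ →₀ ℝ) (j : Γ) (x : X) : ℝ :=
  Finsupp.linearCombination ℝ (fun i => classKernel E x i j) α

variable {E}

open Classical in
theorem classKernel_eq_ite (hE : Equivalence E) (x : X) (i j : Γ) :
    classKernel E x i j = if {y | E (i • x) y} = {y | E (j • x) y} then 1 else 0 := by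
  have hclass : E (i • x) (j • x) ↔ {y | E (i • x) y} = {y | E (j • x) y} := by
    refine ⟨fun h => Set.ext fun y => ⟨hE.trans (hE.symm h), hE.trans h⟩, fun h => ?_⟩
    have hj : j • x ∈ {y | E (j • x) y} := hE.refl _
    rwa [← h] at hj
  simp [classKernel, Set.indicator_apply, hclass]

theorem sq_classMass_le_kernelPairing (hE : Equivalence E) (β : Γ →₀ ℝ) (j : Γ) (x : X) :
    classMass E β j x ^ 2 ≤ kernelPairing (classKernel E x) β β := by
  classical
  have hk : classKernel E x =
      fun (i j : Γ) => if {y | E (i • x) y} = {y | E (j • x) y} then 1 else 0 :=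
    funext₂ (classKernel_eq_ite hE x)
  simp only [classMass, hk]
  exact sq_linearCombination_ite_le_kernelPairing (fun i => {y | E (i • x) y}) β j

theorem classKernel_le_one (x : X) (i j : Γ) : classKernel E x i j ≤ 1 :=
  Set.indicator_le_self' (fun _ _ => zero_le_one) x

theorem classKernel_mul_right (x : X) (i j γ : Γ) :
    classKernel E x (i * γ) (j * γ) = classKernel E (γ • x) i j := by
  simp only [classKernel, mul_smul]
  rfl

theorem classMass_le_one {α : Γ →₀ ℝ} (hα : α ∈ probVectors Γ) (j : Γ) (x : X) :
    classMass E α j x ≤ 1 :=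
  (linearCombination_mono hα.1 fun i => classKernel_le_one x i j).trans_eq hα.2

/-- The classes of `x` and `γ • x` are disjoint, so no `i` is counted twice. -/
theorem classMass_one_add_classMass_le_one (hE : Equivalence E) {α : Γ →₀ ℝ}
    (hα : α ∈ probVectors Γ) {γ : Γ} {x : X} (hx : ¬E (γ • x) x) :
    classMass E α 1 x + classMass E α γ x ≤ 1 := by
  have hdisj (i : Γ) : classKernel E x i 1 + classKernel E x i γ ≤ 1 := by
    by_cases h1 : E (i • x) x
    · have h2 : ¬E (i • x) (γ • x) := fun h2 => hx (hE.trans (hE.symm h2) h1)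
      simp [classKernel, h1, h2]
    · simpa [classKernel, h1] using classKernel_le_one x i γ
  calc classMass E α 1 x + classMass E α γ x
      = Finsupp.linearCombination ℝ (fun i => classKernel E x i 1 + classKernel E x i γ) α := by
        simp [classMass, Finsupp.linearCombination_apply, Finsupp.sum, mul_add,
          Finset.sum_add_distrib]
    _ ≤ 1 := (linearCombination_mono hα.1 hdisj).trans_eq hα.2

theorem classMass_one_smul (α : Γ →₀ ℝ) (γ : Γ) (x : X) :
    classMass E α 1 (γ • x) =
      classMass E (Finsupp.domLCongr (R := ℝ) (Equiv.mulRight γ) α) γ x := by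
  simp only [classMass, Finsupp.domLCongr_apply, Finsupp.domCongr_apply,
    Finsupp.linearCombination_equivMapDomain, Function.comp_def, Equiv.coe_mulRight]
  congr 2 with i
  rw [← classKernel_mul_right, one_mul]

theorem setOf_not_rel_subset (hE : Equivalence E) {α : Γ →₀ ℝ} (hα : α ∈ probVectors Γ)
    (S : X → X) (F : Finset Γ) (t : ℝ) :
    {x | ¬E (S x) x} ⊆
      {x | 1 ≤ 2 + t - classMass E α 1 x - classMass E α 1 (S x)} ∪
        {x | ∀ γ ∈ F, γ • x ≠ S x} ∪
        ⋃ γ ∈ F, {x | t ≤ |classMass E α 1 (γ • x) - classMass E α γ x|} := by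
  intro x hx
  by_cases hF : ∀ γ ∈ F, γ • x ≠ S x
  · exact Or.inl (Or.inr hF)
  push Not at hF
  obtain ⟨γ, hγF, hγS⟩ := hF
  by_cases hclose : t ≤ |classMass E α 1 (γ • x) - classMass E α γ x|
  · exact Or.inr (Set.mem_biUnion hγF hclose)
  have hdisj := classMass_one_add_classMass_le_one hE hα (hγS ▸ hx : ¬E (γ • x) x)
  have := (le_abs_self _).trans_lt (not_le.1 hclose)
  rw [hγS] at this
  exact Or.inl (Or.inl (show 1 ≤ 2 + t - _ - _ by linarith))

end ClassMass

section Integration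

variable {X ι : Type*} [MeasurableSpace X] {μ : Measure X}

theorem integrable_linearCombination {w : X → ι → ℝ} (hw : ∀ i, Integrable (fun x => w x i) μ)
    (α : ι →₀ ℝ) : Integrable (fun x => Finsupp.linearCombination ℝ (w x) α) μ := by
  simp only [Finsupp.linearCombination_apply, Finsupp.sum, smul_eq_mul]
  exact integrable_finsetSum _ fun i _ => (hw i).const_mul _

theorem integral_linearCombination {w : X → ι → ℝ} (hw : ∀ i, Integrable (fun x => w x i) μ)
    (α : ι →₀ ℝ) :
    ∫ x, Finsupp.linearCombination ℝ (w x) α ∂μ =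
      Finsupp.linearCombination ℝ (fun i => ∫ x, w x i ∂μ) α := by
  simp only [Finsupp.linearCombination_apply, Finsupp.sum, smul_eq_mul]
  rw [integral_finsetSum _ fun i _ => (hw i).const_mul _]
  simp only [integral_const_mul]

theorem integrable_kernelPairing {k : X → ι → ι → ℝ}
    (hk : ∀ i j, Integrable (fun x => k x i j) μ) (β β' : ι →₀ ℝ) :
    Integrable (fun x => kernelPairing (k x) β β') μ := by
  simp only [kernelPairing_apply]
  exact integrable_linearCombination (fun i => integrable_linearCombination (hk i) β') β

theorem integral_kernelPairing {k : X → ι → ι → ℝ}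
    (hk : ∀ i j, Integrable (fun x => k x i j) μ) (β β' : ι →₀ ℝ) :
    ∫ x, kernelPairing (k x) β β' ∂μ = kernelPairing (fun i j => ∫ x, k x i j ∂μ) β β' := by
  simp only [kernelPairing_apply]
  rw [integral_linearCombination fun i => integrable_linearCombination (hk i) β']
  simp only [integral_linearCombination (hk _)]

end Integration

section AlmostInvariant

variable {X Γ : Type*} [MeasurableSpace X] [Group Γ] [MulAction Γ X] {μ : Measure X}
  {E : X → X → Prop}

variable (μ E) in
noncomputable def agreementGram (i j : Γ) : ℝ := μ.real {x | E (i • x) (j • x)}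

theorem integrable_classKernel [IsFiniteMeasure μ]
    (hmeas : ∀ i j : Γ, MeasurableSet {x : X | E (i • x) (j • x)}) (i j : Γ) :
    Integrable (fun x => classKernel E x i j) μ :=
  (integrable_const (1 : ℝ)).indicator (hmeas i j)

theorem integral_classKernel
    (hmeas : ∀ i j : Γ, MeasurableSet {x : X | E (i • x) (j • x)}) (i j : Γ) :
    ∫ x, classKernel E x i j ∂μ = agreementGram μ E i j :=
  integral_indicator_one (hmeas i j)

theorem integral_kernelPairing_classKernel [IsFiniteMeasure μ]
    (hmeas : ∀ i j : Γ, MeasurableSet {x : X | E (i • x) (j • x)}) (β β' : Γ →₀ ℝ) :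
    ∫ x, kernelPairing (classKernel E x) β β' ∂μ = kernelPairing (agreementGram μ E) β β' := by
  rw [integral_kernelPairing (integrable_classKernel hmeas)]
  simp only [integral_classKernel hmeas]

theorem agreementGram_mul_right (hmp : ∀ γ : Γ, MeasurePreserving (γ • · : X → X) μ μ)
    (hmeas : ∀ i j : Γ, MeasurableSet {x : X | E (i • x) (j • x)}) (i j γ : Γ) :
    agreementGram μ E (i * γ) (j * γ) = agreementGram μ E i j := by
  simp only [agreementGram, mul_smul]
  exact (hmp γ).measureReal_preimage (hmeas i j).nullMeasurableSet

theorem kernelPairing_agreementGram_nonneg [IsFiniteMeasure μ] (hE : Equivalence E)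
    (hmeas : ∀ i j : Γ, MeasurableSet {x : X | E (i • x) (j • x)}) (β : Γ →₀ ℝ) :
    0 ≤ kernelPairing (agreementGram μ E) β β := by
  rw [← integral_kernelPairing_classKernel hmeas]
  exact integral_nonneg fun x => (sq_nonneg _).trans (sq_classMass_le_kernelPairing hE β 1 x)

/-- A right translate of a near-minimiser of the energy is again one, hence close to it. -/
theorem exists_mem_probVectors_forall_shift_sub_le [IsFiniteMeasure μ] (hE : Equivalence E)
    (hmp : ∀ γ : Γ, MeasurePreserving (γ • · : X → X) μ μ)
    (hmeas : ∀ i j : Γ, MeasurableSet {x : X | E (i • x) (j • x)}) {δ : ℝ} (hδ : 0 < δ) :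
    ∃ α ∈ probVectors Γ, ∀ γ : Γ,
      let β := Finsupp.domLCongr (R := ℝ) (Equiv.mulRight γ) α - α
      kernelPairing (agreementGram μ E) β β ≤ δ := by
  set Q : (Γ →₀ ℝ) → ℝ := fun β => kernelPairing (agreementGram μ E) β β
  have hne : (Q '' probVectors Γ).Nonempty := ⟨_, Set.mem_image_of_mem Q
    (single_one_mem_probVectors 1)⟩
  have hbdd : BddBelow (Q '' probVectors Γ) := ⟨0, by
    rintro _ ⟨β, -, rfl⟩
    exact kernelPairing_agreementGram_nonneg hE hmeas β⟩
  obtain ⟨_, ⟨α, hα, rfl⟩, hαQ⟩ := Real.lt_sInf_add_pos hne (div_pos hδ four_pos)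
  refine ⟨α, hα, fun γ => ?_⟩
  have hQshift : Q (Finsupp.domLCongr (R := ℝ) (Equiv.mulRight γ) α) = Q α := by
    simp only [Q, kernelPairing_domLCongr, Equiv.coe_mulRight,
      agreementGram_mul_right hmp hmeas]
  have := (kernelPairing (agreementGram μ E)).apply_sub_sub_le_of_forall_le convex_probVectors
    (fun c hc => csInf_le hbdd (Set.mem_image_of_mem Q hc))
    (domLCongr_mem_probVectors _ hα) hα (hQshift.trans_le hαQ.le) hαQ.le
  linarith

theorem exists_mem_probVectors_forall_measureReal_le [IsFiniteMeasure μ] (hE : Equivalence E)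
    (hmp : ∀ γ : Γ, MeasurePreserving (γ • · : X → X) μ μ)
    (hmeas : ∀ i j : Γ, MeasurableSet {x : X | E (i • x) (j • x)}) {t η : ℝ} (ht : 0 < t)
    (hη : 0 < η) :
    ∃ α ∈ probVectors Γ, ∀ γ : Γ,
      μ.real {x | t ≤ |classMass E α 1 (γ • x) - classMass E α γ x|} ≤ η := by
  obtain ⟨α, hα, hshift⟩ :=
    exists_mem_probVectors_forall_shift_sub_le hE hmp hmeas (mul_pos (pow_pos ht 2) hη)
  refine ⟨α, hα, fun γ => ?_⟩
  set β := Finsupp.domLCongr (R := ℝ) (Equiv.mulRight γ) α - α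
  have hsubset : {x | t ≤ |classMass E α 1 (γ • x) - classMass E α γ x|} ⊆
      {x | t ^ 2 ≤ kernelPairing (classKernel E x) β β} := fun x hx => by
    have hβ : classMass E β γ x = classMass E α 1 (γ • x) - classMass E α γ x := by
      rw [classMass_one_smul]
      simp only [β, classMass, map_sub]
    calc t ^ 2 ≤ |classMass E β γ x| ^ 2 := by rw [hβ]; gcongr; exact hx
      _ = classMass E β γ x ^ 2 := sq_abs _
      _ ≤ _ := sq_classMass_le_kernelPairing hE β γ x
  have hmarkov := mul_meas_ge_le_integral_of_nonneg
    (Eventually.of_forall fun x => (sq_nonneg _).trans (sq_classMass_le_kernelPairing hE β 1 x))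
    (integrable_kernelPairing (integrable_classKernel (μ := μ) hmeas) β β) (t ^ 2)
  rw [integral_kernelPairing_classKernel hmeas] at hmarkov
  have := hmarkov.trans (hshift γ)
  calc _ ≤ μ.real {x | t ^ 2 ≤ kernelPairing (classKernel E x) β β} := measureReal_mono hsubset
    _ ≤ η := le_of_mul_le_mul_left this (pow_pos ht 2)

end AlmostInvariant

section FullGroup

variable {X Γ : Type*} [MeasurableSpace X] [Group Γ] [MulAction Γ X] {μ : Measure X}
  {E : X → X → Prop}

theorem exists_finset_measureReal_forall_smul_ne_le [MeasurableEq X] [Countable Γ]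
    [IsFiniteMeasure μ] (hact : ∀ γ : Γ, Measurable (γ • · : X → X)) {S : X → X}
    (hS : Measurable S) (horb : ∀ᵐ x ∂μ, ∃ γ : Γ, γ • x = S x) {η : ℝ} (hη : 0 < η) :
    ∃ F : Finset Γ, μ.real {x | ∀ γ ∈ F, γ • x ≠ S x} ≤ η := by
  set s : Finset Γ → Set X := fun F => {x | ∀ γ ∈ F, γ • x ≠ S x}
  have hs (F : Finset Γ) : MeasurableSet (s F) := by
    have : s F = ⋂ γ ∈ F, {x | γ • x = S x}ᶜ := by ext; simp [s]
    rw [this]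
    exact F.measurableSet_biInter fun γ _ => (measurableSet_eq_fun (hact γ) hS).compl
  have hanti : Antitone s := fun F G hFG x hx γ hγ => hx γ (hFG hγ)
  have hnull : μ (⋂ F, s F) = 0 := by
    refine measure_mono_null ?_ (ae_iff.1 horb)
    rintro x hx ⟨γ, hγ⟩
    exact Set.mem_iInter.1 hx {γ} γ (Finset.mem_singleton_self γ) hγ
  have hlim := tendsto_measure_iInter_atTop (fun F => (hs F).nullMeasurableSet) hanti
    ⟨∅, measure_ne_top μ _⟩
  rw [hnull] at hlim
  obtain ⟨F, hF⟩ := (hlim.eventually (gt_mem_nhds (ENNReal.ofReal_pos.2 hη))).exists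
  exact ⟨F, ENNReal.toReal_le_of_le_ofReal hη.le hF.le⟩

theorem one_sub_le_integral_classMass_one [IsFiniteMeasure μ] {ε : ℝ}
    (hmeas : ∀ i j : Γ, MeasurableSet {x : X | E (i • x) (j • x)})
    (h : ∀ γ : Γ, 1 - ε ≤ μ.real {x | E (γ • x) x}) {α : Γ →₀ ℝ} (hα : α ∈ probVectors Γ) :
    1 - ε ≤ ∫ x, classMass E α 1 x ∂μ := by
  change 1 - ε ≤ ∫ x, Finsupp.linearCombination ℝ (fun i => classKernel E x i 1) α ∂μ
  rw [integral_linearCombination (integrable_classKernel hmeas · 1)]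
  refine le_linearCombination_of_mem_probVectors hα fun i => ?_
  simpa [integral_classKernel hmeas, agreementGram] using h i

variable [IsProbabilityMeasure μ]

theorem measureReal_not_rel_le [MeasurableEq X] [Countable Γ]
    (hmp : ∀ γ : Γ, MeasurePreserving (γ • · : X → X) μ μ) (hE : Equivalence E)
    (hmeas : ∀ i j : Γ, MeasurableSet {x : X | E (i • x) (j • x)}) {ε : ℝ}
    (h : ∀ γ : Γ, 1 - ε ≤ μ.real {x | E (γ • x) x}) {S : X ≃ᵐ X} (hS : MeasurePreserving S μ μ)
    (horb : ∀ᵐ x ∂μ, ∃ γ : Γ, γ • x = S x) {t : ℝ} (ht : 0 < t) :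
    μ.real {x | ¬E (S x) x} ≤ 2 * ε + 3 * t := by
  obtain ⟨F, hF⟩ := exists_finset_measureReal_forall_smul_ne_le (fun γ => (hmp γ).measurable)
    S.measurable horb ht
  obtain ⟨α, hα, hα_inv⟩ := exists_mem_probVectors_forall_measureReal_le hE hmp hmeas ht
    (div_pos ht (Nat.cast_add_one_pos F.card))
  set q : X → ℝ := classMass E α 1
  have hq : Integrable q μ := integrable_linearCombination (integrable_classKernel hmeas · 1) α
  have hqS : Integrable (fun x => q (S x)) μ := (hS.integrable_comp_emb S.measurableEmbedding).2 hq
  have hfar : μ.real {x | 1 ≤ 2 + t - q x - q (S x)} ≤ 2 * ε + t := by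
    have hmarkov := mul_meas_ge_le_integral_of_nonneg (μ := μ)
      (f := fun x => 2 + t - q x - q (S x))
      (Eventually.of_forall fun x => by
        simp only [Pi.zero_apply]
        linarith [classMass_le_one (E := E) hα 1 x, classMass_le_one (E := E) hα 1 (S x)])
      (((integrable_const (2 + t)).sub hq).sub hqS) 1
    rw [integral_sub (f := fun x => 2 + t - q x) ((integrable_const _).sub hq) hqS,
      integral_sub (f := fun _ => 2 + t) (integrable_const _) hq,
      hS.integral_comp' q, integral_const, probReal_univ, one_smul, one_mul] at hmarkov
    linarith [one_sub_le_integral_classMass_one hmeas h hα]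
  have hclose : ∑ γ ∈ F, μ.real {x | t ≤ |q (γ • x) - classMass E α γ x|} ≤ t :=
    calc _ ≤ ∑ _γ ∈ F, t / (F.card + 1) := Finset.sum_le_sum fun γ _ => hα_inv γ
      _ ≤ t := by
        rw [Finset.sum_const, nsmul_eq_mul, mul_div_left_comm]
        exact mul_le_of_le_one_right ht.le ((div_le_one (by positivity)).2 (by linarith))
  calc μ.real {x | ¬E (S x) x}
      ≤ μ.real ({x | 1 ≤ 2 + t - q x - q (S x)} ∪ {x | ∀ γ ∈ F, γ • x ≠ S x} ∪
          ⋃ γ ∈ F, {x | t ≤ |q (γ • x) - classMass E α γ x|}) :=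
        measureReal_mono (setOf_not_rel_subset hE hα S F t)
    _ ≤ μ.real {x | 1 ≤ 2 + t - q x - q (S x)} + μ.real {x | ∀ γ ∈ F, γ • x ≠ S x} +
          ∑ γ ∈ F, μ.real {x | t ≤ |q (γ • x) - classMass E α γ x|} := by
        grw [measureReal_union_le, measureReal_union_le, measureReal_biUnion_finset_le]
    _ ≤ 2 * ε + 3 * t := by linarith

theorem one_sub_two_mul_le_measureReal_rel [MeasurableEq X] [Countable Γ]
    (hmp : ∀ γ : Γ, MeasurePreserving (γ • · : X → X) μ μ) (hE : Equivalence E)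
    (hmeas : ∀ i j : Γ, MeasurableSet {x : X | E (i • x) (j • x)}) {ε : ℝ}
    (h : ∀ γ : Γ, 1 - ε ≤ μ.real {x | E (γ • x) x}) {S : X ≃ᵐ X} (hS : MeasurePreserving S μ μ)
    (horb : ∀ᵐ x ∂μ, ∃ γ : Γ, γ • x = S x) :
    1 - 2 * ε ≤ μ.real {x | E (S x) x} := by
  have hbad : μ.real {x | ¬E (S x) x} ≤ 2 * ε := le_of_forall_pos_le_add fun t ht => by
    linarith [measureReal_not_rel_le hmp hE hmeas h hS horb (div_pos ht three_pos)]
  have hcover : μ.real Set.univ ≤ μ.real {x | E (S x) x} + μ.real {x | ¬E (S x) x} :=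
    (measureReal_mono fun x _ => em (E (S x) x)).trans (measureReal_union_le _ _)
  rw [probReal_univ] at hcover
  linarith

end FullGroup

theorem phiE_ge_of_phiE_ge_on_group_general
    {X : Type} [MeasurableSpace X] [StandardBorelSpace X]
    (μ : Measure X) [IsProbabilityMeasure μ]
    {Γ : Type} [Group Γ] [Countable Γ] [MulAction Γ X]
    (hmp : ∀ γ : Γ, MeasurePreserving (fun x : X => γ • x) μ μ)
    (E : X → X → Prop) (hE : IsCountableMPER μ E)
    (ε : ℝ) (hε : 0 < ε)
    (h : ∀ γ : Γ, 1 - ε ≤ (μ {x | E (γ • x) x}).toReal) :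
    ∀ S : X ≃ᵐ X, MeasurePreserving S μ μ → (∀ᵐ x ∂μ, ∃ γ : Γ, γ • x = S x) →
      1 - 4 * ε ≤ (μ {x | E (S x) x}).toReal := by
  intro S hS horb
  have hmeas (i j : Γ) : MeasurableSet {x : X | E (i • x) (j • x)} :=
    ((hmp i).measurable.prodMk (hmp j).measurable) hE.2.1
  have := one_sub_two_mul_le_measureReal_rel hmp hE.1 hmeas h hS horb
  linarith [Measure.real_def μ {x | E (S x) x}]

/-- Theorem 2.7: if `φ_E(γ) ≥ 1 - ε` for all `γ ∈ Γ`, then `φ_E(S) ≥ 1 - 4ε`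
for every `S` in the full group `[F]` of the orbit equivalence relation `F`. -/
theorem phiE_ge_of_phiE_ge_on_group
    {X : Type} [MeasurableSpace X] [StandardBorelSpace X]
    (μ : Measure X) [IsProbabilityMeasure μ]
    {Γ : Type} [Group Γ] [Countable Γ] [MulAction Γ X]
    (hmeas : ∀ γ : Γ, Measurable fun x : X => γ • x)
    (hmp : ∀ γ : Γ, MeasurePreserving (fun x : X => γ • x) μ μ)
    (E : X → X → Prop) (hE : IsCountableMPER μ E)
    (ε : ℝ) (hε : 0 < ε)
    (h : ∀ γ : Γ, 1 - ε ≤ (μ {x | E (γ • x) x}).toReal) :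
    ∀ S : X ≃ᵐ X, MeasurePreserving S μ μ → (∀ᵐ x ∂μ, ∃ γ : Γ, γ • x = S x) →
      1 - 4 * ε ≤ (μ {x | E (S x) x}).toReal :=
  phiE_ge_of_phiE_ge_on_group_general μ hmp E hE ε hε h
end

section
/- Let Γ be a countable group with a measure-preserving action on a standard probability space (X,μ), let F = E^X_Γ be the orbit equivalence relation, and let E ⊆ F be a countable, measure-preserving subequivalence relation. Suppose φ_E(γ) → 0 along the cofinite filter on Γ. Then for any Borel maps S, T : X → X with S(x) F x and T(x) F x for μ-a.e. x, the quantity μ({x : S(x) E T(γ·x)}) → 0 along the cofinite filter on Γ. -/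
open MeasureTheory Filter Topology

/-!
Up to a set of small measure, `S x = a • x` and `T x = b • x` with `a, b` ranging over finite
sets `A, B ⊆ Γ`. On the remaining set, `S x E T (γ • x)` forces `a • x E (b * γ) • x`, and by
invariance of `μ` this set has measure `φ_E (a * (b * γ)⁻¹)`. For fixed `a, b` the map
`γ ↦ a * (b * γ)⁻¹` is injective, so each of these finitely many terms tends to `0`.
-/

open scoped ENNReal

section

variable {X : Type*} [MeasurableSpace X] {μ : Measure X}

lemma exists_finset_measure_setOf_forall_notMem_lt {ι : Type*} [Countable ι] [IsFiniteMeasure μ]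
    {s : ι → Set X} (hs : ∀ i, NullMeasurableSet (s i) μ) (hcover : ∀ᵐ x ∂μ, ∃ i, x ∈ s i)
    {ε : ℝ≥0∞} (hε : 0 < ε) : ∃ A : Finset ι, μ {x | ∀ i ∈ A, x ∉ s i} < ε := by
  set t : Finset ι → Set X := fun A => {x | ∀ i ∈ A, x ∉ s i}
  have ht : ∀ A, NullMeasurableSet (t A) μ := fun A => by
    convert NullMeasurableSet.biInter A.countable_toSet fun i _ => (hs i).compl using 1
    ext x
    simp [t]
  have hanti : Antitone t := fun A B hAB x hx i hi => hx i (hAB hi)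
  have hlim : μ (⋂ A, t A) = 0 := by
    refine measure_mono_null (t := {x | ¬∃ i, x ∈ s i}) ?_ hcover
    rintro x hx ⟨i, hi⟩
    exact Set.mem_iInter.1 hx {i} i (Finset.mem_singleton_self i) hi
  have htend := tendsto_measure_iInter_atTop ht hanti ⟨∅, measure_ne_top μ _⟩
  rw [hlim] at htend
  exact (htend.eventually_lt_const hε).exists

variable {G : Type*} [Group G] [MulAction G X]

lemma exists_finset_measure_setOf_forall_smul_ne_lt [Countable G] [IsFiniteMeasure μ]
    [MeasurableConstSMul G X] [MeasurableEq X] {f : X → X} (hf : Measurable f)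
    (hfG : ∀ᵐ x ∂μ, ∃ g : G, g • x = f x) {ε : ℝ≥0∞} (hε : 0 < ε) :
    ∃ A : Finset G, μ {x | ∀ g ∈ A, g • x ≠ f x} < ε :=
  exists_finset_measure_setOf_forall_notMem_lt (s := fun g : G => {x | g • x = f x})
    (fun g => (measurableSet_eq_fun (measurable_const_smul g) hf).nullMeasurableSet) hfG hε

variable [SMulInvariantMeasure G X μ]

lemma measure_setOf_rel_smul_smul (R : X → X → Prop) (a b : G) :
    μ {x | R (a • x) (b • x)} = μ {x | R ((a * b⁻¹) • x) x} := by
  rw [← measure_preimage_smul μ b {x | R ((a * b⁻¹) • x) x}]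
  congr 1
  ext x
  simp [mul_smul]

lemma measure_setOf_rel_twisted_le (R : X → X → Prop) (S T : X → X) (A B : Finset G) (g : G) :
    μ {x | R (S x) (T (g • x))} ≤ μ {x | ∀ a ∈ A, a • x ≠ S x} +
      μ {x | ∀ b ∈ B, b • x ≠ T x} + ∑ a ∈ A, ∑ b ∈ B, μ {x | R ((a * (b * g)⁻¹) • x) x} := by
  set NS := {x | ∀ a ∈ A, a • x ≠ S x}
  set NT := {x | ∀ b ∈ B, b • x ≠ T x}
  have hcover : {x | R (S x) (T (g • x))} ⊆ (NS ∪ (g • ·) ⁻¹' NT) ∪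
      ⋃ a ∈ A, ⋃ b ∈ B, {x | R (a • x) ((b * g) • x)} := by
    intro x hx
    by_cases hS : x ∈ NS
    · exact Or.inl (Or.inl hS)
    by_cases hT : g • x ∈ NT
    · exact Or.inl (Or.inr hT)
    obtain ⟨a, ha, hax⟩ : ∃ a ∈ A, a • x = S x := by simpa [NS] using hS
    obtain ⟨b, hb, hbx⟩ : ∃ b ∈ B, b • g • x = T (g • x) := by simpa [NT] using hT
    refine Or.inr (Set.mem_biUnion ha (Set.mem_biUnion hb ?_))
    simpa [mul_smul, hax, hbx] using hx
  calc μ {x | R (S x) (T (g • x))}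
      ≤ μ NS + μ ((g • ·) ⁻¹' NT) + μ (⋃ a ∈ A, ⋃ b ∈ B, {x | R (a • x) ((b * g) • x)}) :=
        (measure_mono hcover).trans <|
          (measure_union_le _ _).trans (add_le_add (measure_union_le _ _) le_rfl)
    _ ≤ μ NS + μ NT + ∑ a ∈ A, ∑ b ∈ B, μ {x | R ((a * (b * g)⁻¹) • x) x} := by
        rw [measure_preimage_smul μ g NT]
        gcongr
        refine (measure_biUnion_finset_le A _).trans (Finset.sum_le_sum fun a _ => ?_)
        refine (measure_biUnion_finset_le B _).trans_eq (Finset.sum_congr rfl fun b _ => ?_)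
        exact measure_setOf_rel_smul_smul R a (b * g)

theorem tendsto_measure_setOf_rel_twisted [Countable G] [IsFiniteMeasure μ]
    [MeasurableConstSMul G X] [MeasurableEq X] {R : X → X → Prop}
    (h0 : Tendsto (fun g : G => μ {x | R (g • x) x}) cofinite (𝓝 0))
    {S T : X → X} (hS : Measurable S) (hT : Measurable T)
    (hSG : ∀ᵐ x ∂μ, ∃ g : G, g • x = S x) (hTG : ∀ᵐ x ∂μ, ∃ g : G, g • x = T x) :
    Tendsto (fun g : G => μ {x | R (S x) (T (g • x))}) cofinite (𝓝 0) := by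
  refine ENNReal.tendsto_nhds_zero.2 fun ε hε => ?_
  have hε3 : 0 < ε / 3 := ENNReal.div_pos hε.ne' ENNReal.ofNat_ne_top
  obtain ⟨A, hA⟩ := exists_finset_measure_setOf_forall_smul_ne_lt hS hSG hε3
  obtain ⟨B, hB⟩ := exists_finset_measure_setOf_forall_smul_ne_lt hT hTG hε3
  have hsum : Tendsto (fun g : G => ∑ a ∈ A, ∑ b ∈ B, μ {x | R ((a * (b * g)⁻¹) • x) x})
      cofinite (𝓝 0) := by
    have hinj (a b : G) : Function.Injective fun g : G => a * (b * g)⁻¹ := fun g₁ g₂ h => by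
      simpa using h
    simpa using tendsto_finsetSum A fun a _ => tendsto_finsetSum B fun b _ =>
      h0.comp (hinj a b).tendsto_cofinite
  filter_upwards [ENNReal.tendsto_nhds_zero.1 hsum _ hε3] with g hg
  calc μ {x | R (S x) (T (g • x))} ≤ ε / 3 + ε / 3 + ε / 3 :=
        (measure_setOf_rel_twisted_le R S T A B g).trans (add_le_add (add_le_add hA.le hB.le) hg)
    _ = ε := ENNReal.add_thirds ε

end

theorem tendsto_measure_twisted_of_tendsto_phiE_general
    {X : Type} [MeasurableSpace X] [StandardBorelSpace X]
    (μ : Measure X) [IsProbabilityMeasure μ]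
    {Γ : Type} [Group Γ] [Countable Γ] [MulAction Γ X]
    (hmp : ∀ γ : Γ, MeasurePreserving (fun x : X => γ • x) μ μ)
    (E : X → X → Prop)
    (h0 : Tendsto (fun γ : Γ => (μ {x | E (γ • x) x}).toReal) cofinite (nhds 0))
    (S T : X → X) (hS : Measurable S) (hT : Measurable T)
    (hSF : ∀ᵐ x ∂μ, ∃ γ : Γ, γ • x = S x)
    (hTF : ∀ᵐ x ∂μ, ∃ γ : Γ, γ • x = T x) :
    Tendsto (fun γ : Γ => (μ {x | E (S x) (T (γ • x))}).toReal)
      cofinite (nhds 0) := by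
  have : MeasurableConstSMul Γ X := ⟨fun γ => (hmp γ).measurable⟩
  have : SMulInvariantMeasure Γ X μ :=
    ⟨fun γ _ hs => (hmp γ).measure_preimage hs.nullMeasurableSet⟩
  rw [← ENNReal.toReal_zero] at h0 ⊢
  rw [ENNReal.tendsto_toReal_iff (fun _ => measure_ne_top μ _) ENNReal.zero_ne_top] at h0 ⊢
  exact tendsto_measure_setOf_rel_twisted h0 hS hT hSF hTF

/-- Lemma 3.2 (generalized): if `φ_E(γ) → 0` along the cofinite filter of `Γ`,
then for Borel maps `S, T : X → X` with `S(x) F x` and `T(x) F x` a.e.,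
`μ({x : S(x) E T(γ·x)}) → 0` along the cofinite filter. -/
theorem tendsto_measure_twisted_of_tendsto_phiE
    {X : Type} [MeasurableSpace X] [StandardBorelSpace X]
    (μ : Measure X) [IsProbabilityMeasure μ]
    {Γ : Type} [Group Γ] [Countable Γ] [MulAction Γ X]
    (hmeas : ∀ γ : Γ, Measurable fun x : X => γ • x)
    (hmp : ∀ γ : Γ, MeasurePreserving (fun x : X => γ • x) μ μ)
    (E : X → X → Prop) (hE : IsCountableMPER μ E)
    (hEF : ∀ x y, E x y → ∃ γ : Γ, γ • x = y)
    (h0 : Tendsto (fun γ : Γ => (μ {x | E (γ • x) x}).toReal) cofinite (nhds 0))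
    (S T : X → X) (hS : Measurable S) (hT : Measurable T)
    (hSF : ∀ᵐ x ∂μ, ∃ γ : Γ, γ • x = S x)
    (hTF : ∀ᵐ x ∂μ, ∃ γ : Γ, γ • x = T x) :
    Tendsto (fun γ : Γ => (μ {x | E (S x) (T (γ • x))}).toReal)
      cofinite (nhds 0) :=
  tendsto_measure_twisted_of_tendsto_phiE_general μ hmp E h0 S T hS hT hSF hTF
end

section
/- Let Γ be an infinite countable group. Then there exists a function f : Γ → ℝ such that: f(γ) > 0 for all γ; f is symmetric (f(γ) = f(γ⁻¹) for all γ); f(γ) → 0 along the cofinite filter on Γ; f is not summable (Σ_{γ∈Γ} f(γ) = ∞); and for every subset S ⊆ Γ with Σ_{γ∈S} f(γ) < ∞ and all δ₁, δ₂ ∈ Γ, one has Σ_{γ∈S} f(δ₁γδ₂) < ∞ (i.e., the summable ideal associated to f is two-sided translation invariant). -/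
/-!
Exhaust `Γ` by finite symmetric sets `D₀ = {1}`, `Dₙ₊₁ = Dₙ * Dₙ ∪ {eₙ, eₙ⁻¹}` along an
enumeration `e` of `Γ`, and let `ℓ γ` be the first index `n` with `γ ∈ Dₙ`. Then `ℓ` is
symmetric, has finite sublevel sets and satisfies `ℓ (γ * δ) ≤ ℓ γ + ℓ δ + 1`, so
`ℓ γ ≤ ℓ (δ₁ * γ * δ₂) + K` for a constant `K` depending only on `δ₁, δ₂`. Hence
`f = (ℓ + 1)⁻¹` tends to `0`, satisfies `f (δ₁ * γ * δ₂) ≤ (K + 1) f γ`, and is not summable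
because `ℓ (eₙ) ≤ n + 1` bounds it below by the harmonic series.
-/

open Filter Topology Pointwise

section LengthFunction

variable {Γ : Type*} {ℓ : Γ → ℕ}

theorem tendsto_inv_succ_length [Northcott ℓ] :
    Tendsto (fun γ => ((ℓ γ : ℝ) + 1)⁻¹) cofinite (𝓝 0) :=
  tendsto_inv_atTop_zero.comp <| tendsto_atTop_add_const_right _ 1 <|
    tendsto_natCast_atTop_atTop.comp ((northcott_iff_tendsto ℓ).1 ‹_›)

theorem not_summable_inv_succ_length {e : ℕ → Γ} (he : Function.Injective e) (c : ℕ)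
    (h : ∀ n, ℓ (e n) ≤ n + c) : ¬Summable fun γ => ((ℓ γ : ℝ) + 1)⁻¹ := by
  intro hsum
  have h_shifted : Summable fun n : ℕ => (((n + (c + 1) : ℕ) : ℝ))⁻¹ :=
    (hsum.comp_injective he).of_nonneg_of_le (fun _ => by positivity) fun n => by
      have h' : (ℓ (e n) : ℝ) ≤ n + c := by exact_mod_cast h n
      dsimp only [Function.comp_apply]
      gcongr
      push_cast
      linarith
  exact Real.not_summable_natCast_inv ((summable_nat_add_iff (c + 1)).1 h_shifted)

variable [Group Γ]

theorem le_length_mul_mul_add (h_inv : ∀ γ, ℓ γ⁻¹ = ℓ γ) {C : ℕ}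
    (h_mul : ∀ γ δ, ℓ (γ * δ) ≤ ℓ γ + ℓ δ + C) (γ δ₁ δ₂ : Γ) :
    ℓ γ ≤ ℓ (δ₁ * γ * δ₂) + (ℓ δ₁ + ℓ δ₂ + 2 * C) := by
  have h_right := h_mul (δ₁⁻¹ * (δ₁ * γ * δ₂)) δ₂⁻¹
  have h_left := h_mul δ₁⁻¹ (δ₁ * γ * δ₂)
  rw [show δ₁⁻¹ * (δ₁ * γ * δ₂) * δ₂⁻¹ = γ by group, h_inv] at h_right
  rw [h_inv] at h_left
  omega

theorem inv_succ_le_mul_inv_succ {a b K : ℕ} (h : a ≤ b + K) :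
    ((b : ℝ) + 1)⁻¹ ≤ (K + 1) * ((a : ℝ) + 1)⁻¹ := by
  rw [← div_eq_mul_inv, le_div_iff₀ (by positivity), inv_mul_le_iff₀ (by positivity)]
  have h' : (a : ℝ) ≤ b + K := by exact_mod_cast h
  nlinarith [(K.cast_nonneg : (0 : ℝ) ≤ K), (b.cast_nonneg : (0 : ℝ) ≤ b)]

theorem summable_inv_succ_length_mul_mul (h_inv : ∀ γ, ℓ γ⁻¹ = ℓ γ) {C : ℕ}
    (h_mul : ∀ γ δ, ℓ (γ * δ) ≤ ℓ γ + ℓ δ + C) {S : Set Γ}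
    (hS : Summable fun γ : S => ((ℓ γ : ℝ) + 1)⁻¹) (δ₁ δ₂ : Γ) :
    Summable fun γ : S => ((ℓ (δ₁ * γ * δ₂) : ℝ) + 1)⁻¹ :=
  (hS.mul_left _).of_nonneg_of_le (fun _ => by positivity) fun γ =>
    inv_succ_le_mul_inv_succ (le_length_mul_mul_add h_inv h_mul γ δ₁ δ₂)

end LengthFunction

section Exhaustion

variable {Γ : Type*} [Group Γ] (e : ℕ → Γ)

def doublingExhaustion : ℕ → Set Γ
  | 0 => {1}
  | n + 1 => doublingExhaustion n * doublingExhaustion n ∪ {e n, (e n)⁻¹}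

theorem one_mem_doublingExhaustion : ∀ n, (1 : Γ) ∈ doublingExhaustion e n
  | 0 => rfl
  | n + 1 => Or.inl ⟨1, one_mem_doublingExhaustion n, 1, one_mem_doublingExhaustion n,
      one_mul 1⟩

theorem mul_mem_doublingExhaustion {n : ℕ} {γ δ : Γ} (hγ : γ ∈ doublingExhaustion e n)
    (hδ : δ ∈ doublingExhaustion e n) : γ * δ ∈ doublingExhaustion e (n + 1) :=
  Or.inl (Set.mul_mem_mul hγ hδ)

theorem apply_mem_doublingExhaustion (n : ℕ) : e n ∈ doublingExhaustion e (n + 1) :=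
  Or.inr (Set.mem_insert _ _)

theorem doublingExhaustion_mono : Monotone (doublingExhaustion e) :=
  monotone_nat_of_le_succ fun n γ hγ => by
    simpa using mul_mem_doublingExhaustion e hγ (one_mem_doublingExhaustion e n)

theorem inv_doublingExhaustion : ∀ n, (doublingExhaustion e n)⁻¹ = doublingExhaustion e n
  | 0 => by simp [doublingExhaustion]
  | n + 1 => by
    simp only [doublingExhaustion, Set.union_inv, mul_inv_rev, inv_doublingExhaustion n,
      Set.inv_insert, Set.inv_singleton, inv_inv, Set.pair_comm]

theorem inv_mem_doublingExhaustion_iff {n : ℕ} {γ : Γ} :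
    γ⁻¹ ∈ doublingExhaustion e n ↔ γ ∈ doublingExhaustion e n := by
  rw [← Set.mem_inv, inv_doublingExhaustion]

theorem finite_doublingExhaustion : ∀ n, (doublingExhaustion e n).Finite
  | 0 => Set.finite_singleton 1
  | n + 1 => ((finite_doublingExhaustion n).mul (finite_doublingExhaustion n)).union
      (Set.toFinite _)

noncomputable def exhaustionLength (γ : Γ) : ℕ := sInf {n | γ ∈ doublingExhaustion e n}

variable {e}

theorem exhaustionLength_le {n : ℕ} {γ : Γ} (h : γ ∈ doublingExhaustion e n) :
    exhaustionLength e γ ≤ n :=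
  Nat.sInf_le h

theorem exhaustionLength_apply_le (n : ℕ) : exhaustionLength e (e n) ≤ n + 1 :=
  exhaustionLength_le (apply_mem_doublingExhaustion e n)

theorem mem_doublingExhaustion_exhaustionLength (he : Function.Surjective e) (γ : Γ) :
    γ ∈ doublingExhaustion e (exhaustionLength e γ) := by
  have h_nonempty : {n | γ ∈ doublingExhaustion e n}.Nonempty := by
    obtain ⟨n, rfl⟩ := he γ
    exact ⟨n + 1, apply_mem_doublingExhaustion e n⟩
  exact Nat.sInf_mem h_nonempty

theorem exhaustionLength_inv (he : Function.Surjective e) (γ : Γ) :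
    exhaustionLength e γ⁻¹ = exhaustionLength e γ :=
  le_antisymm
    (exhaustionLength_le ((inv_mem_doublingExhaustion_iff e).2
      (mem_doublingExhaustion_exhaustionLength he γ)))
    (exhaustionLength_le ((inv_mem_doublingExhaustion_iff e).1
      (mem_doublingExhaustion_exhaustionLength he γ⁻¹)))

theorem exhaustionLength_mul_le (he : Function.Surjective e) (γ δ : Γ) :
    exhaustionLength e (γ * δ) ≤ exhaustionLength e γ + exhaustionLength e δ + 1 :=
  exhaustionLength_le <| mul_mem_doublingExhaustion e
    (doublingExhaustion_mono e (Nat.le_add_right _ _)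
      (mem_doublingExhaustion_exhaustionLength he γ))
    (doublingExhaustion_mono e (Nat.le_add_left _ _)
      (mem_doublingExhaustion_exhaustionLength he δ))

theorem northcott_exhaustionLength (he : Function.Surjective e) :
    Northcott (exhaustionLength e) where
  finite_le n := (finite_doublingExhaustion e n).subset fun γ hγ =>
    doublingExhaustion_mono e hγ (mem_doublingExhaustion_exhaustionLength he γ)

end Exhaustion

/-- Lemma 3.9: every infinite countable group `Γ` carries a positive, symmetric
function `f ∈ c₀(Γ) \ ℓ¹(Γ)` whose associated summable ideal is two-sided
translation invariant. -/
theorem exists_c0_not_summable_invariant_ideal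
    (Γ : Type) [Group Γ] [Countable Γ] [Infinite Γ] :
    ∃ f : Γ → ℝ, (∀ γ, 0 < f γ) ∧ (∀ γ, f γ = f γ⁻¹) ∧
      Tendsto f cofinite (nhds 0) ∧
      ¬ Summable f ∧
      ∀ S : Set Γ, Summable (fun γ : S => f γ) →
        ∀ δ₁ δ₂ : Γ, Summable (fun γ : S => f (δ₁ * γ * δ₂)) := by
  obtain ⟨e⟩ := nonempty_equiv_of_countable (α := ℕ) (β := Γ)
  have h_inv := exhaustionLength_inv e.surjective
  have := northcott_exhaustionLength e.surjective
  exact ⟨fun γ => ((exhaustionLength e γ : ℝ) + 1)⁻¹, fun γ => by positivity,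
    fun γ => by simp only [h_inv], tendsto_inv_succ_length,
    not_summable_inv_succ_length e.injective 1 exhaustionLength_apply_le,
    fun _ hS => summable_inv_succ_length_mul_mul h_inv (exhaustionLength_mul_le e.surjective) hS⟩
end

section
/- Let Γ be a countable group with a free, measure-preserving, ergodic action on a standard probability space (X,μ), let A ⊆ X be a Borel set with μ(A) > 0, and let E_A be a countable Borel equivalence relation on A with E_A ⊆ E^X_Γ|A such that μ({x ∈ A : γ·x ∈ A and γ·x E_A x}) → 0 along the cofinite filter on Γ. Then there exists a countable Borel equivalence relation E on X with E ⊆ E^X_Γ, E|A = E_A, and φ_E(γ) = μ({x : γ·x E x}) → 0 along the cofinite filter on Γ. Moreover, if E_A is ergodic (every Borel subset of A that is a union of E_A-classes is μ-null or has full measure in A), then E can be chosen ergodic. -/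
/-!
Enumerate `Γ` as `g 0 = 1, g 1, …` and send each point `x` of the saturation `Γ • A` (conull by
ergodicity) to its first hit `g n • x ∈ A`, `n` minimal. The extension `E` relates two points when
their first hits are `E_A`-related, and is the identity off `Γ • A`. If `γ • x` is `E`-related to
`x ≠ γ • x`, then either `x` or `γ • x` needs at least `N` steps to reach `A`, which has small
measure for large `N`, or `g j • x` lies in the `E_A`-return set of one of the finitely many
conjugates `g i * γ * (g j)⁻¹`, `i, j < N`, all of which tend to infinity with `γ`. An
`E`-invariant set is, up to a null set, the set of points whose first hit lies in its trace on `A`,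
which transfers ergodicity from `E_A` to `E`.
-/

open MeasureTheory Filter Topology
open scoped ENNReal

theorem exists_surjective_nat_apply_zero {α : Type*} [Countable α] (a : α) :
    ∃ g : ℕ → α, g 0 = a ∧ Function.Surjective g := by
  have : Nonempty α := ⟨a⟩
  obtain ⟨e, he⟩ := exists_surjective_nat α
  refine ⟨fun n => n.casesOn a e, rfl, fun b => ?_⟩
  obtain ⟨n, rfl⟩ := he b
  exact ⟨n + 1, rfl⟩

theorem ENNReal.tendsto_nhds_zero_of_forall_le_add {ι : Type*} {l : Filter ι} {f : ι → ℝ≥0∞}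
    {a : ℕ → ℝ≥0∞} {b : ℕ → ι → ℝ≥0∞} (ha : Tendsto a atTop (𝓝 0))
    (hb : ∀ N, Tendsto (b N) l (𝓝 0)) (hf : ∀ N, ∀ᶠ i in l, f i ≤ a N + b N i) :
    Tendsto f l (𝓝 0) := by
  refine ENNReal.tendsto_nhds_zero.2 fun ε hε => ?_
  have hε2 : 0 < ε / 2 := ENNReal.half_pos hε.ne'
  obtain ⟨N, hN⟩ := (ENNReal.tendsto_nhds_zero.1 ha _ hε2).exists
  filter_upwards [hf N, ENNReal.tendsto_nhds_zero.1 (hb N) _ hε2] with i hfi hbi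
  calc f i ≤ a N + b N i := hfi
    _ ≤ ε / 2 + ε / 2 := add_le_add hN hbi
    _ = ε := ENNReal.add_halves ε

section ExtendRel

variable {X : Type*} {r : X → X → Prop} {π : X → X}

def extendRel (r : X → X → Prop) (π : X → X) (x y : X) : Prop :=
  r (π x) (π y) ∨ x = y

theorem extendRel_equivalence (hsymm : ∀ x y, r x y → r y x)
    (htrans : ∀ x y z, r x y → r y z → r x z) : Equivalence (extendRel r π) where
  refl _ := .inr rfl
  symm := by
    rintro x y (h | rfl)
    exacts [.inl (hsymm _ _ h), .inr rfl]
  trans := by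
    rintro x y z (hxy | rfl) hyz
    · rcases hyz with hyz | rfl
      exacts [.inl (htrans _ _ _ hxy hyz), .inl hxy]
    · exact hyz

theorem extendRel_iff {A : Set X} (hrefl : ∀ x ∈ A, r x x) (hπ : ∀ x ∈ A, π x = x) {x y : X}
    (hx : x ∈ A) (hy : y ∈ A) : extendRel r π x y ↔ r x y := by
  rw [extendRel, hπ x hx, hπ y hy]
  exact ⟨fun h => h.elim id fun h => h ▸ hrefl x hx, .inl⟩

theorem measurableSet_extendRel [MeasurableSpace X] [MeasurableEq X]
    (hr : MeasurableSet {p : X × X | r p.1 p.2}) (hπ : Measurable π) :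
    MeasurableSet {p : X × X | extendRel r π p.1 p.2} :=
  ((hπ.comp measurable_fst).prodMk (hπ.comp measurable_snd) hr).union measurableSet_diagonal

end ExtendRel

section FirstHit

variable {Γ X : Type*} [SMul Γ X] (g : ℕ → Γ) (A : Set X)

def hitSet : Set X := {x | ∃ n, g n • x ∈ A}

theorem exists_smul_mem_or_notMem_hitSet (x : X) : ∃ n, g n • x ∈ A ∨ x ∉ hitSet g A := by
  by_cases hx : x ∈ hitSet g A
  exacts [hx.imp fun _ => .inl, ⟨0, .inr hx⟩]

open Classical in
/-- The least `n` with `g n • x ∈ A`, and `0` if there is none. -/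
noncomputable def hitIndex (x : X) : ℕ :=
  Nat.find (exists_smul_mem_or_notMem_hitSet g A x)

noncomputable def firstHit (x : X) : X :=
  g (hitIndex g A x) • x

variable {g A}

theorem firstHit_mem {x : X} (hx : x ∈ hitSet g A) : firstHit g A x ∈ A := by
  classical
  exact (Nat.find_spec (exists_smul_mem_or_notMem_hitSet g A x)).resolve_right (not_not.2 hx)

theorem preimage_firstHit_subset (s : Set X) : firstHit g A ⁻¹' s ⊆ ⋃ n, (g n • ·) ⁻¹' s :=
  fun _ hx => Set.mem_iUnion.2 ⟨_, hx⟩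

variable [MeasurableSpace X] [MeasurableConstSMul Γ X]

theorem measurableSet_hitSet (hA : MeasurableSet A) : MeasurableSet (hitSet g A) := by
  have : hitSet g A = ⋃ n, (g n • ·) ⁻¹' A := by ext; simp [hitSet]
  rw [this]
  exact .iUnion fun n => measurable_const_smul (g n) hA

theorem measurableSet_smul_mem_or_notMem_hitSet (hA : MeasurableSet A) (n : ℕ) :
    MeasurableSet {x | g n • x ∈ A ∨ x ∉ hitSet g A} :=
  (measurable_const_smul (g n) hA).union (measurableSet_hitSet hA).compl

theorem measurable_hitIndex (hA : MeasurableSet A) : Measurable (hitIndex g A) := by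
  classical
  exact measurable_find _ (measurableSet_smul_mem_or_notMem_hitSet hA)

theorem measurable_firstHit (hA : MeasurableSet A) : Measurable (firstHit g A) := by
  classical
  exact Measurable.find (fun n => measurable_const_smul (g n))
    (measurableSet_smul_mem_or_notMem_hitSet hA) _

theorem tendsto_measure_le_hitIndex {μ : Measure X} [IsFiniteMeasure μ] (hA : MeasurableSet A) :
    Tendsto (fun N => μ {x | N ≤ hitIndex g A x}) atTop (𝓝 0) := by
  have hempty : ⋂ N, {x | N ≤ hitIndex g A x} = ∅ :=
    Set.eq_empty_of_forall_notMem fun x hx =>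
      (Set.mem_iInter.1 hx (hitIndex g A x + 1)).not_gt (Nat.lt_succ_self _)
  have h := tendsto_measure_iInter_atTop (s := fun N => {x | N ≤ hitIndex g A x})
    (fun _ => (measurableSet_le measurable_const (measurable_hitIndex hA)).nullMeasurableSet)
    (fun _ _ hMN _ hx => le_trans hMN hx) ⟨0, measure_ne_top μ _⟩
  rwa [hempty, measure_empty] at h

end FirstHit

section GroupAction

variable {Γ X : Type*} [Group Γ] [MulAction Γ X] {g : ℕ → Γ} {A : Set X}
  {r : X → X → Prop}

theorem firstHit_eq_self (h1 : g 0 = 1) {x : X} (hx : x ∈ A) : firstHit g A x = x := by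
  classical
  have : hitIndex g A x = 0 := (Nat.find_eq_zero _).2 (.inl (by rwa [h1, one_smul]))
  rw [firstHit, this, h1, one_smul]

theorem smul_preimage_hitSet (hg : Function.Surjective g) (γ : Γ) :
    (γ • ·) ⁻¹' hitSet g A = hitSet g A := by
  ext x
  constructor
  · rintro ⟨n, hn⟩
    obtain ⟨m, hm⟩ := hg (g n * γ)
    exact ⟨m, by rwa [hm, mul_smul]⟩
  · rintro ⟨n, hn⟩
    obtain ⟨m, hm⟩ := hg (g n * γ⁻¹)
    exact ⟨m, show g m • γ • x ∈ A by rwa [hm, mul_smul, inv_smul_smul]⟩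

theorem countable_setOf_extendRel_firstHit (hr : ∀ x, {y | r x y}.Countable) (x : X) :
    {y | extendRel r (firstHit g A) x y}.Countable := by
  refine ((Set.countable_singleton x).union (Set.countable_iUnion fun n =>
    (hr (firstHit g A x)).image ((g n)⁻¹ • ·))).mono ?_
  rintro y (hy | rfl)
  · exact .inr (Set.mem_iUnion.2 ⟨_, _, hy, inv_smul_smul _ y⟩)
  · exact .inl rfl

theorem exists_smul_eq_of_extendRel_firstHit (hr : ∀ x y, r x y → ∃ γ : Γ, γ • x = y) {x y : X}
    (h : extendRel r (firstHit g A) x y) : ∃ γ : Γ, γ • x = y := by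
  rcases h with h | rfl
  · obtain ⟨δ, hδ⟩ := hr _ _ h
    refine ⟨(g (hitIndex g A y))⁻¹ * δ * g (hitIndex g A x), ?_⟩
    rw [mul_smul, mul_smul, ← firstHit, hδ, firstHit, inv_smul_smul]
  · exact ⟨1, one_smul _ _⟩

/-- Where both points hit `A` within `N` steps, `y = g j • x` is moved by the conjugate
`g i * γ * (g j)⁻¹` to an `r`-related point. -/
theorem setOf_extendRel_firstHit_smul_subset (γ : Γ) (N : ℕ) :
    {x | extendRel r (firstHit g A) (γ • x) x} ⊆
      {x | γ • x = x} ∪ {x | N ≤ hitIndex g A x} ∪ (γ • ·) ⁻¹' {x | N ≤ hitIndex g A x} ∪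
        ⋃ i ∈ Finset.range N, ⋃ j ∈ Finset.range N,
          (g j • ·) ⁻¹' {y | r ((g i * γ * (g j)⁻¹) • y) y} := by
  rintro x (hx | hx)
  · rcases lt_or_ge (hitIndex g A x) N with hj | hj
    · rcases lt_or_ge (hitIndex g A (γ • x)) N with hi | hi
      · refine .inr (Set.mem_biUnion (Finset.mem_range.2 hi)
          (Set.mem_biUnion (Finset.mem_range.2 hj) ?_))
        simpa [firstHit, smul_smul] using hx
      · exact .inl (.inr hi)
    · exact .inl (.inl (.inr hj))
  · exact .inl (.inl (.inl hx))

variable [MeasurableSpace X] {μ : Measure X}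

theorem measure_compl_hitSet_eq_zero [MeasurableConstSMul Γ X] (hg : Function.Surjective g)
    (herg : ∀ B : Set X, MeasurableSet B →
      (∀ γ : Γ, (fun x : X => γ • x) ⁻¹' B = B) → μ B = 0 ∨ μ Bᶜ = 0)
    (hA : MeasurableSet A) (hApos : μ A ≠ 0) : μ (hitSet g A)ᶜ = 0 := by
  refine (herg _ (measurableSet_hitSet hA) (smul_preimage_hitSet hg)).resolve_left fun h => ?_
  obtain ⟨n, hn⟩ := hg 1
  refine hApos (measure_mono_null (fun x hx => ?_) h)
  exact show ∃ n, g n • x ∈ A from ⟨n, by rwa [hn, one_smul]⟩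

variable [SMulInvariantMeasure Γ X μ]

theorem measure_setOf_extendRel_firstHit_smul_le {γ : Γ} (hγ : ∀ᵐ x ∂μ, γ • x ≠ x) (N : ℕ) :
    μ {x | extendRel r (firstHit g A) (γ • x) x} ≤ 2 * μ {x | N ≤ hitIndex g A x} +
      ∑ i ∈ Finset.range N, ∑ j ∈ Finset.range N, μ {y | r ((g i * γ * (g j)⁻¹) • y) y} := by
  have hfix : μ {x | γ • x = x} = 0 := measure_mono_null (fun _ hx => not_not.2 hx) (ae_iff.1 hγ)
  calc μ {x | extendRel r (firstHit g A) (γ • x) x}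
      ≤ μ {x | γ • x = x} + μ {x | N ≤ hitIndex g A x} +
          μ ((γ • ·) ⁻¹' {x | N ≤ hitIndex g A x}) +
          μ (⋃ i ∈ Finset.range N, ⋃ j ∈ Finset.range N,
            (g j • ·) ⁻¹' {y | r ((g i * γ * (g j)⁻¹) • y) y}) := by
        refine (measure_mono (setOf_extendRel_firstHit_smul_subset γ N)).trans ?_
        refine (measure_union_le _ _).trans (add_le_add_left ?_ _)
        refine (measure_union_le _ _).trans (add_le_add_left ?_ _)
        exact measure_union_le _ _
    _ ≤ 2 * μ {x | N ≤ hitIndex g A x} +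
          ∑ i ∈ Finset.range N, ∑ j ∈ Finset.range N, μ {y | r ((g i * γ * (g j)⁻¹) • y) y} := by
        rw [hfix, zero_add, measure_preimage_smul, ← two_mul]
        gcongr
        refine (measure_biUnion_finset_le _ _).trans (Finset.sum_le_sum fun i _ => ?_)
        refine (measure_biUnion_finset_le _ _).trans (Finset.sum_le_sum fun j _ => ?_)
        rw [measure_preimage_smul]

theorem tendsto_measure_setOf_extendRel_firstHit_smul [IsFiniteMeasure μ]
    [MeasurableConstSMul Γ X] (hA : MeasurableSet A)
    (hfree : ∀ᵐ x ∂μ, ∀ γ : Γ, γ ≠ 1 → γ • x ≠ x)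
    (hr : Tendsto (fun δ : Γ => μ {x | r (δ • x) x}) cofinite (𝓝 0)) :
    Tendsto (fun γ : Γ => μ {x | extendRel r (firstHit g A) (γ • x) x}) cofinite (𝓝 0) := by
  refine ENNReal.tendsto_nhds_zero_of_forall_le_add
    (a := fun N => 2 * μ {x | N ≤ hitIndex g A x})
    (b := fun N γ => ∑ i ∈ Finset.range N, ∑ j ∈ Finset.range N,
      μ {y | r ((g i * γ * (g j)⁻¹) • y) y}) ?_ (fun N => ?_) (fun N => ?_)
  · simpa using
      ENNReal.Tendsto.const_mul (tendsto_measure_le_hitIndex hA) (.inr ENNReal.ofNat_ne_top)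
  · have hconj : ∀ i j,
        Tendsto (fun γ => μ {y | r ((g i * γ * (g j)⁻¹) • y) y}) cofinite (𝓝 0) := fun _ _ =>
      hr.comp (Function.Injective.tendsto_cofinite fun a b h => by simpa using h)
    simpa using tendsto_finsetSum _ fun i _ => tendsto_finsetSum _ fun j _ => hconj i j
  · filter_upwards [eventually_cofinite_ne 1] with γ hγ
    exact measure_setOf_extendRel_firstHit_smul_le (hfree.mono fun _ hx => hx γ hγ) N

/-- Every point of `hitSet g A` is related to its first hit, which lies in `A`. -/
theorem measure_eq_zero_of_extendRel_firstHit_invariant (h1 : g 0 = 1)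
    (hD : μ (hitSet g A)ᶜ = 0) (hrefl : ∀ x ∈ A, r x x) {C : Set X}
    (hC : ∀ x y, extendRel r (firstHit g A) x y → (x ∈ C ↔ y ∈ C)) (hCA : μ (C ∩ A) = 0) :
    μ C = 0 := by
  have hsub : C ⊆ firstHit g A ⁻¹' (C ∩ A) ∪ (hitSet g A)ᶜ := by
    intro x hx
    by_cases hxD : x ∈ hitSet g A
    · have hhit := firstHit_mem hxD
      refine .inl ⟨(hC _ _ (.inl ?_)).1 hx, hhit⟩
      rw [firstHit_eq_self h1 hhit]
      exact hrefl _ hhit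
    · exact .inr hxD
  refine measure_mono_null hsub (measure_union_null ?_ hD)
  exact measure_mono_null (preimage_firstHit_subset _)
    (measure_iUnion_null fun n => measure_preimage_smul_null hCA _)

theorem extendRel_firstHit_ergodic [IsFiniteMeasure μ] (h1 : g 0 = 1) (hD : μ (hitSet g A)ᶜ = 0)
    (hA : MeasurableSet A) (hdom : ∀ x y, r x y → x ∈ A ∧ y ∈ A) (hrefl : ∀ x ∈ A, r x x)
    (hergA : ∀ B ⊆ A, MeasurableSet B → (∀ x y, r x y → (x ∈ B ↔ y ∈ B)) →
      μ B = 0 ∨ μ B = μ A)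
    {B : Set X} (hB : MeasurableSet B)
    (hBinv : ∀ x y, extendRel r (firstHit g A) x y → (x ∈ B ↔ y ∈ B)) :
    μ B = 0 ∨ μ Bᶜ = 0 := by
  have hrE : ∀ x y, r x y → extendRel r (firstHit g A) x y := fun x y h =>
    (extendRel_iff hrefl (fun _ => firstHit_eq_self h1) (hdom x y h).1 (hdom x y h).2).2 h
  have hBA : ∀ x y, r x y → (x ∈ B ∩ A ↔ y ∈ B ∩ A) := fun x y h => by
    simp [hBinv x y (hrE x y h), (hdom x y h).1, (hdom x y h).2]
  rcases hergA (B ∩ A) Set.inter_subset_right (hB.inter hA) hBA with h | h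
  · exact .inl (measure_eq_zero_of_extendRel_firstHit_invariant h1 hD hrefl hBinv h)
  · refine .inr (measure_eq_zero_of_extendRel_firstHit_invariant h1 hD hrefl
      (fun x y hxy => not_congr (hBinv x y hxy)) ?_)
    have hBcA : Bᶜ ∩ A = A \ (B ∩ A) := by
      rw [Set.sdiff_inter_self_eq_sdiff, Set.sdiff_eq, Set.inter_comm]
    rw [hBcA, measure_sdiff Set.inter_subset_right (hB.inter hA).nullMeasurableSet
      (measure_ne_top μ _), h, tsub_self]

end GroupAction

/-- Lemma 4.2: given a free, measure-preserving, ergodic action of `Γ` on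
`(X, μ)`, a positive-measure Borel set `A`, and a countable Borel equivalence
relation `E_A` on `A` contained in `E^X_Γ|A` with
`μ({x ∈ A : γ·x ∈ A and γ·x E_A x}) → 0` as `γ → ∞`, there is a countable
Borel equivalence relation `E ⊆ E^X_Γ` on `X` with `E|A = E_A` and
`φ_E(γ) → 0` as `γ → ∞`; moreover, if `E_A` is ergodic then `E` can be chosen
ergodic. -/
theorem extend_relation_with_vanishing_phiE
    {X : Type} [MeasurableSpace X] [StandardBorelSpace X]
    (μ : Measure X) [IsProbabilityMeasure μ]
    {Γ : Type} [Group Γ] [Countable Γ] [MulAction Γ X]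
    (hmeas : ∀ γ : Γ, Measurable fun x : X => γ • x)
    (hmp : ∀ γ : Γ, MeasurePreserving (fun x : X => γ • x) μ μ)
    (hfree : ∀ᵐ x ∂μ, ∀ γ : Γ, γ ≠ 1 → γ • x ≠ x)
    (herg : ∀ B : Set X, MeasurableSet B →
      (∀ γ : Γ, (fun x : X => γ • x) ⁻¹' B = B) → μ B = 0 ∨ μ Bᶜ = 0)
    (A : Set X) (hA : MeasurableSet A) (hApos : 0 < μ A)
    (EA : X → X → Prop)
    (hEAdom : ∀ x y, EA x y → x ∈ A ∧ y ∈ A)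
    (hEArefl : ∀ x ∈ A, EA x x)
    (hEAsymm : ∀ x y, EA x y → EA y x)
    (hEAtrans : ∀ x y z, EA x y → EA y z → EA x z)
    (hEAmeas : MeasurableSet {p : X × X | EA p.1 p.2})
    (hEAcount : ∀ x, {y | EA x y}.Countable)
    (hEAF : ∀ x y, EA x y → ∃ γ : Γ, γ • x = y)
    (h0 : Tendsto
      (fun γ : Γ => (μ {x | x ∈ A ∧ γ • x ∈ A ∧ EA (γ • x) x}).toReal)
      cofinite (nhds 0)) :
    ∃ E : X → X → Prop, Equivalence E ∧
      MeasurableSet {p : X × X | E p.1 p.2} ∧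
      (∀ x, {y | E x y}.Countable) ∧
      (∀ x y, E x y → ∃ γ : Γ, γ • x = y) ∧
      (∀ x ∈ A, ∀ y ∈ A, (E x y ↔ EA x y)) ∧
      Tendsto (fun γ : Γ => (μ {x | E (γ • x) x}).toReal) cofinite (nhds 0) ∧
      ((∀ B ⊆ A, MeasurableSet B → (∀ x y, EA x y → (x ∈ B ↔ y ∈ B)) →
          μ B = 0 ∨ μ B = μ A) →
        ∀ B : Set X, MeasurableSet B → (∀ x y, E x y → (x ∈ B ↔ y ∈ B)) →
          μ B = 0 ∨ μ Bᶜ = 0) := by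
  have : MeasurableConstSMul Γ X := ⟨hmeas⟩
  have : SMulInvariantMeasure Γ X μ :=
    ⟨fun γ _ hs => (hmp γ).measure_preimage hs.nullMeasurableSet⟩
  obtain ⟨g, hg1, hg⟩ := exists_surjective_nat_apply_zero (1 : Γ)
  have hD : μ (hitSet g A)ᶜ = 0 := measure_compl_hitSet_eq_zero hg herg hA hApos.ne'
  have hr : Tendsto (fun δ : Γ => μ {x | EA (δ • x) x}) cofinite (𝓝 0) := by
    have hset : ∀ δ : Γ, {x | x ∈ A ∧ δ • x ∈ A ∧ EA (δ • x) x} = {x | EA (δ • x) x} :=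
      fun _ => Set.ext fun _ => ⟨fun h => h.2.2, fun h => ⟨(hEAdom _ _ h).2, (hEAdom _ _ h).1, h⟩⟩
    simp only [hset] at h0
    exact (ENNReal.tendsto_toReal_zero_iff fun _ => measure_ne_top μ _).1 h0
  refine ⟨extendRel EA (firstHit g A), extendRel_equivalence hEAsymm hEAtrans,
    measurableSet_extendRel hEAmeas (measurable_firstHit hA),
    countable_setOf_extendRel_firstHit hEAcount,
    fun _ _ => exists_smul_eq_of_extendRel_firstHit hEAF,
    fun _ hx _ hy => extendRel_iff hEArefl (fun _ => firstHit_eq_self hg1) hx hy,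
    (ENNReal.tendsto_toReal_zero_iff fun _ => measure_ne_top μ _).2
      (tendsto_measure_setOf_extendRel_firstHit_smul hA hfree hr),
    fun hergA B hB => extendRel_firstHit_ergodic hg1 hD hA hEAdom hEArefl hergA hB⟩
end

section
/- Let Γ be a countable group with Kazhdan pair (Q,ε), let δ > 0, and let φ : Γ → ℂ be a positive-definite function with φ(1) = 1. If Re φ(γ) ≥ 1 − δ²ε²/2 for every γ ∈ Q, then Re φ(γ) ≥ 1 − 2δ² for every γ ∈ Γ. -/
open MeasureTheory Filter Topology
open scoped ComplexOrder

/-- `(Q, ε)` is a Kazhdan pair for `Γ`. -/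
def IsKazhdanPair (Γ : Type*) [Group Γ] (Q : Set Γ) (ε : ℝ) : Prop :=
  Q.Finite ∧ Subgroup.closure Q = ⊤ ∧ 0 < ε ∧
  ∀ (H : Type) [NormedAddCommGroup H] [InnerProductSpace ℂ H] [CompleteSpace H]
    (π : Γ →* (H →L[ℂ] H)), (∀ (γ : Γ) (ξ : H), ‖π γ ξ‖ = ‖ξ‖) →
    (∃ ξ : H, ∀ γ ∈ Q, ‖π γ ξ - ξ‖ < ε * ‖ξ‖) →
    ∃ η : H, η ≠ 0 ∧ ∀ γ : Γ, π γ η = η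

/-- `φ : Γ → ℂ` is positive-definite. -/
def IsPositiveDefinite {Γ : Type*} [Group Γ] (φ : Γ → ℂ) : Prop :=
  ∀ (n : ℕ) (g : Fin n → Γ) (α : Fin n → ℂ),
    0 ≤ ∑ i, ∑ j, (starRingEnd ℂ) (α i) * α j * φ ((g i)⁻¹ * g j)

/-!
The GNS construction turns `φ` into a unitary representation `π` with a unit vector `ξ` such that
`φ γ = ⟪ξ, π γ ξ⟫`, so `‖π γ ξ - ξ‖² = 2 - 2 Re φ γ` and `ξ` is `|δ| ε`-almost invariant on `Q`.
The component `w` of `ξ` orthogonal to the `Γ`-fixed vectors is moved exactly as much as `ξ`, and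
the Kazhdan property of the orthogonal complement of the fixed vectors, which has no nonzero fixed
vector, gives `ε ‖w‖ ≤ |δ| ε`. Hence `‖π γ ξ - ξ‖ = ‖π γ w - w‖ ≤ 2 ‖w‖ ≤ 2 |δ|` for every `γ`.
-/

open scoped ComplexConjugate
open UniformSpace

section

variable {Γ : Type*} [Group Γ]

namespace IsPositiveDefinite

variable {φ : Γ → ℂ}

theorem sum_finset_nonneg (hφ : IsPositiveDefinite φ) (s : Finset Γ) (α : Γ → ℂ) :
    0 ≤ ∑ x ∈ s, ∑ y ∈ s, conj (α x) * α y * φ (x⁻¹ * y) := by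
  convert hφ s.card (fun i => s.equivFin.symm i) (fun i => α (s.equivFin.symm i)) using 1
  rw [← s.sum_coe_sort]
  refine Fintype.sum_equiv s.equivFin _ _ fun x => ?_
  rw [← s.sum_coe_sort]
  exact Fintype.sum_equiv s.equivFin _ _ fun y => by simp

theorem conj_apply (hφ : IsPositiveDefinite φ) (γ : Γ) : conj (φ γ) = φ γ⁻¹ := by
  -- `n = 1`: `φ 1` is real; `α = (1, 1)`, `(1, i)`: `φ γ + φ γ⁻¹` and `i (φ γ - φ γ⁻¹)` are real.
  have h₀ := hφ 1 ![1] ![1]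
  have h₁ := hφ 2 ![1, γ] ![1, 1]
  have h₂ := hφ 2 ![1, γ] ![1, Complex.I]
  simp only [Fin.sum_univ_one, Fin.sum_univ_two, Matrix.cons_val_zero, Matrix.cons_val_one,
    inv_one, one_mul, mul_one, inv_mul_cancel, map_one, Complex.conj_I, Complex.nonneg_iff,
    Complex.add_re, Complex.add_im, Complex.mul_re, Complex.mul_im, Complex.I_re, Complex.I_im,
    Complex.neg_re, Complex.neg_im] at h₀ h₁ h₂
  apply Complex.ext <;> simp only [Complex.conj_re, Complex.conj_im] <;> linarith [h₀.2, h₁.2, h₂.2]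

end IsPositiveDefinite

def posDefForm (φ : Γ → ℂ) (f g : Γ →₀ ℂ) : ℂ :=
  f.sum fun x a => g.sum fun y b => conj a * b * φ (x⁻¹ * y)

section PosDefForm

variable {φ : Γ → ℂ}

theorem posDefForm_add_left (f₁ f₂ g : Γ →₀ ℂ) :
    posDefForm φ (f₁ + f₂) g = posDefForm φ f₁ g + posDefForm φ f₂ g := by
  classical
  refine Finsupp.sum_add_index' (fun _ => by simp) fun x a₁ a₂ => ?_
  simp only [map_add, add_mul, Finsupp.sum_add]

theorem posDefForm_smul_left (r : ℂ) (f g : Γ →₀ ℂ) :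
    posDefForm φ (r • f) g = conj r * posDefForm φ f g := by
  rw [posDefForm, Finsupp.sum_smul_index' fun _ => by simp, posDefForm, Finsupp.mul_sum]
  refine Finsupp.sum_congr fun x _ => ?_
  simp only [smul_eq_mul, map_mul, Finsupp.mul_sum, mul_assoc]

theorem conj_posDefForm (hφ : IsPositiveDefinite φ) (f g : Γ →₀ ℂ) :
    conj (posDefForm φ g f) = posDefForm φ f g := by
  simp only [posDefForm, map_finsuppSum, map_mul, Complex.conj_conj, hφ.conj_apply, mul_inv_rev,
    inv_inv]
  rw [Finsupp.sum_comm]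
  exact Finsupp.sum_congr fun x _ => Finsupp.sum_congr fun y _ => by ring

theorem posDefForm_self_nonneg (hφ : IsPositiveDefinite φ) (f : Γ →₀ ℂ) :
    0 ≤ posDefForm φ f f :=
  hφ.sum_finset_nonneg f.support f

theorem posDefForm_single_single (x y : Γ) :
    posDefForm φ (Finsupp.single x 1) (Finsupp.single y 1) = φ (x⁻¹ * y) := by
  simp [posDefForm]

theorem posDefForm_mapDomain_mul_left (γ : Γ) (f g : Γ →₀ ℂ) :
    posDefForm φ (f.mapDomain (γ * ·)) (g.mapDomain (γ * ·)) = posDefForm φ f g := by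
  simp only [posDefForm, Finsupp.sum_mapDomain_index_inj (mul_right_injective γ), mul_inv_rev,
    mul_assoc, inv_mul_cancel_left]

end PosDefForm

-- `posDefForm φ` may be degenerate; `Completion` below also passes to the Hausdorff quotient.
def GNSSpace (_φ : Γ → ℂ) : Type _ := Γ →₀ ℂ

namespace GNSSpace

noncomputable section

variable (φ : Γ → ℂ)

instance : AddCommGroup (GNSSpace φ) := inferInstanceAs (AddCommGroup (Γ →₀ ℂ))

instance : Module ℂ (GNSSpace φ) := inferInstanceAs (Module ℂ (Γ →₀ ℂ))

def single (x : Γ) : GNSSpace φ := Finsupp.single x 1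

def translate : Γ →* (GNSSpace φ →ₗ[ℂ] GNSSpace φ) where
  toFun γ := Finsupp.lmapDomain ℂ ℂ (γ * ·)
  map_one' := by simp only [one_mul]; exact Finsupp.lmapDomain_id ℂ ℂ
  map_mul' γ γ' := by
    simp only [mul_assoc]
    exact Finsupp.lmapDomain_comp ℂ ℂ (γ' * ·) (γ * ·)

theorem translate_single (γ x : Γ) : translate φ γ (single φ x) = single φ (γ * x) :=
  Finsupp.mapDomain_single

variable [hφ : Fact (IsPositiveDefinite φ)]

abbrev innerCore : PreInnerProductSpace.Core ℂ (GNSSpace φ) where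
  inner := posDefForm φ
  conj_inner_symm := conj_posDefForm hφ.out
  re_inner_nonneg f := (Complex.nonneg_iff.mp (posDefForm_self_nonneg hφ.out f)).1
  add_left := posDefForm_add_left
  smul_left f g r := posDefForm_smul_left r f g

instance : SeminormedAddCommGroup (GNSSpace φ) :=
  InnerProductSpace.Core.toSeminormedAddCommGroup (c := innerCore φ)

instance : InnerProductSpace ℂ (GNSSpace φ) := InnerProductSpace.ofCore (innerCore φ)

variable {φ}

theorem inner_translate (γ : Γ) (f g : GNSSpace φ) :
    inner ℂ (translate φ γ f) (translate φ γ g) = inner ℂ f g :=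
  posDefForm_mapDomain_mul_left γ f g

theorem norm_translate (γ : Γ) (f : GNSSpace φ) : ‖translate φ γ f‖ = ‖f‖ := by
  rw [@norm_eq_sqrt_re_inner ℂ, @norm_eq_sqrt_re_inner ℂ, inner_translate]

end

end GNSSpace

section IsometricCompletion

variable {𝕜 E : Type*} [NormedField 𝕜] [SeminormedAddCommGroup E] [NormedSpace 𝕜 E]

noncomputable def MonoidHom.isometricCompletion (ρ : Γ →* (E →ₗ[𝕜] E))
    (hρ : ∀ γ x, ‖ρ γ x‖ = ‖x‖) : Γ →* (Completion E →L[𝕜] Completion E) where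
  toFun γ := (LinearIsometry.mk (ρ γ) (hρ γ)).toContinuousLinearMap.completion
  map_one' := by
    ext x
    induction x using Completion.induction_on with
    | hp => exact isClosed_eq (ContinuousLinearMap.continuous _) continuous_id
    | ih a => simp
  map_mul' γ γ' := by
    ext x
    induction x using Completion.induction_on with
    | hp => exact isClosed_eq (ContinuousLinearMap.continuous _) (ContinuousLinearMap.continuous _)
    | ih a => simp

variable (ρ : Γ →* (E →ₗ[𝕜] E)) (hρ : ∀ γ x, ‖ρ γ x‖ = ‖x‖)

theorem MonoidHom.isometricCompletion_apply_coe (γ : Γ) (x : E) :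
    ρ.isometricCompletion hρ γ x = ρ γ x := by
  simp [MonoidHom.isometricCompletion]

theorem MonoidHom.norm_isometricCompletion_apply (γ : Γ) (x : Completion E) :
    ‖ρ.isometricCompletion hρ γ x‖ = ‖x‖ := by
  induction x using Completion.induction_on with
  | hp => exact isClosed_eq (by fun_prop) continuous_norm
  | ih a => simp [MonoidHom.isometricCompletion_apply_coe, hρ]

end IsometricCompletion

namespace GNSSpace

variable (φ : Γ → ℂ) [Fact (IsPositiveDefinite φ)]

noncomputable def rep : Γ →* (Completion (GNSSpace φ) →L[ℂ] Completion (GNSSpace φ)) :=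
  (translate φ).isometricCompletion norm_translate

noncomputable def cyclicVector : Completion (GNSSpace φ) := single φ 1

variable {φ}

theorem inner_single_single (x y : Γ) : inner ℂ (single φ x) (single φ y) = φ (x⁻¹ * y) :=
  posDefForm_single_single x y

theorem inner_cyclicVector_rep (γ : Γ) :
    inner ℂ (cyclicVector φ) (rep φ γ (cyclicVector φ)) = φ γ := by
  rw [cyclicVector, rep, MonoidHom.isometricCompletion_apply_coe, Completion.inner_coe,
    translate_single, inner_single_single, inv_one, one_mul, mul_one]

theorem norm_cyclicVector (hφ₁ : φ 1 = 1) : ‖cyclicVector φ‖ = 1 := by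
  rw [cyclicVector, Completion.norm_coe, @norm_eq_sqrt_re_inner ℂ, inner_single_single, inv_one,
    one_mul, hφ₁]
  simp

theorem norm_rep_apply (γ : Γ) (x : Completion (GNSSpace φ)) : ‖rep φ γ x‖ = ‖x‖ :=
  MonoidHom.norm_isometricCompletion_apply _ _ γ x

theorem norm_rep_cyclicVector_sub_sq (hφ₁ : φ 1 = 1) (γ : Γ) :
    ‖rep φ γ (cyclicVector φ) - cyclicVector φ‖ ^ 2 = 2 - 2 * (φ γ).re := by
  rw [@norm_sub_sq ℂ, norm_rep_apply, norm_cyclicVector hφ₁, inner_re_symm,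
    inner_cyclicVector_rep]
  simp only [RCLike.re_to_complex]
  ring

end GNSSpace

section FixedVectors

variable {H : Type*} [NormedAddCommGroup H] [InnerProductSpace ℂ H]

def MonoidHom.fixedSubmodule (π : Γ →* (H →L[ℂ] H)) : Submodule ℂ H where
  carrier := {v | ∀ γ, π γ v = v}
  add_mem' hv hw γ := by simp [hv γ, hw γ]
  zero_mem' γ := map_zero _
  smul_mem' c v hv γ := by simp [hv γ]

variable (π : Γ →* (H →L[ℂ] H))

theorem MonoidHom.mem_fixedSubmodule {v : H} : v ∈ π.fixedSubmodule ↔ ∀ γ, π γ v = v := Iff.rfl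

theorem MonoidHom.isClosed_fixedSubmodule : IsClosed (π.fixedSubmodule : Set H) := by
  have : (π.fixedSubmodule : Set H) = ⋂ γ, {v | π γ v = v} := by
    ext v; simp [mem_fixedSubmodule]
  rw [this]
  exact isClosed_iInter fun γ => isClosed_eq (π γ).continuous continuous_id

variable {π}

theorem MonoidHom.inner_map_map_of_norm_map (hπ : ∀ γ v, ‖π γ v‖ = ‖v‖) (γ : Γ) (v w : H) :
    inner ℂ (π γ v) (π γ w) = inner ℂ v w :=
  (LinearIsometry.mk (π γ : H →ₗ[ℂ] H) (hπ γ)).inner_map_map v w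

theorem MonoidHom.map_mem_orthogonal_fixedSubmodule (hπ : ∀ γ v, ‖π γ v‖ = ‖v‖) {u : H}
    (hu : u ∈ π.fixedSubmodule ᗮ) (γ : Γ) : π γ u ∈ π.fixedSubmodule ᗮ := by
  intro v hv
  rw [← hv γ, π.inner_map_map_of_norm_map hπ]
  exact hu v hv

noncomputable def MonoidHom.restrictOrthogonalFixed (hπ : ∀ γ v, ‖π γ v‖ = ‖v‖) :
    Γ →* (π.fixedSubmodule ᗮ →L[ℂ] π.fixedSubmodule ᗮ) where
  toFun γ := ((π γ).comp (π.fixedSubmodule ᗮ).subtypeL).codRestrict _ fun u =>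
    π.map_mem_orthogonal_fixedSubmodule hπ u.2 γ
  map_one' := by ext; simp
  map_mul' γ γ' := by ext u; exact congrArg (· (u : H)) (map_mul π γ γ')

end FixedVectors

section KazhdanPair

variable {Q : Set Γ} {ε : ℝ} {H : Type} [NormedAddCommGroup H] [InnerProductSpace ℂ H]
  [CompleteSpace H] {π : Γ →* (H →L[ℂ] H)}

theorem IsKazhdanPair.pos (hQε : IsKazhdanPair Γ Q ε) : 0 < ε :=
  hQε.2.2.1

theorem IsKazhdanPair.exists_le_norm_map_sub (hQε : IsKazhdanPair Γ Q ε)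
    (hπ : ∀ γ v, ‖π γ v‖ = ‖v‖) {u : H} (hu : u ∈ π.fixedSubmodule ᗮ) :
    ∃ γ ∈ Q, ε * ‖u‖ ≤ ‖π γ u - u‖ := by
  by_contra! hsmall
  obtain ⟨η, hη, hfix⟩ := hQε.2.2.2 _ (π.restrictOrthogonalFixed hπ) (fun γ v => hπ γ v)
    ⟨⟨u, hu⟩, hsmall⟩
  have hηfix : (η : H) ∈ π.fixedSubmodule := fun γ => congrArg Subtype.val (hfix γ)
  exact hη (Subtype.ext (inner_self_eq_zero.mp (η.2 _ hηfix)))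

theorem IsKazhdanPair.norm_map_sub_le (hQε : IsKazhdanPair Γ Q ε) (hπ : ∀ γ v, ‖π γ v‖ = ‖v‖)
    {ξ : H} {δ : ℝ} (hξ : ∀ γ ∈ Q, ‖π γ ξ - ξ‖ ≤ δ * ε) (γ : Γ) : ‖π γ ξ - ξ‖ ≤ 2 * δ := by
  set N := π.fixedSubmodule
  have : CompleteSpace N := π.isClosed_fixedSubmodule.completeSpace_coe
  set w := ξ - N.starProjection ξ
  have hdiff : ∀ γ, π γ w - w = π γ ξ - ξ := fun γ => by
    simp only [w, map_sub, N.starProjection_apply_mem ξ γ]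
    abel
  have hw : ‖w‖ ≤ δ := by
    obtain ⟨γ₀, hγ₀, hle⟩ := hQε.exists_le_norm_map_sub hπ (N.sub_starProjection_mem_orthogonal ξ)
    rw [hdiff] at hle
    exact le_of_mul_le_mul_left (by linarith [hξ γ₀ hγ₀]) hQε.pos
  calc ‖π γ ξ - ξ‖ = ‖π γ w - w‖ := by rw [hdiff]
    _ ≤ ‖π γ w‖ + ‖w‖ := norm_sub_le _ _
    _ ≤ 2 * δ := by linarith [hπ γ w]

end KazhdanPair

end

theorem posdef_almost_invariant_everywhere_general
    (Γ : Type) [Group Γ]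
    (Q : Set Γ) (ε : ℝ) (hQε : IsKazhdanPair Γ Q ε)
    (δ : ℝ)
    (φ : Γ → ℂ) (hφ : IsPositiveDefinite φ) (hφ1 : φ 1 = 1)
    (hQ : ∀ γ ∈ Q, 1 - δ ^ 2 * ε ^ 2 / 2 ≤ (φ γ).re) :
    ∀ γ : Γ, 1 - 2 * δ ^ 2 ≤ (φ γ).re := by
  have : Fact (IsPositiveDefinite φ) := ⟨hφ⟩
  set π := GNSSpace.rep φ
  set ξ := GNSSpace.cyclicVector φ
  have hnorm : ∀ γ, ‖π γ ξ - ξ‖ ^ 2 = 2 - 2 * (φ γ).re :=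
    GNSSpace.norm_rep_cyclicVector_sub_sq hφ1
  have hsmall : ∀ γ ∈ Q, ‖π γ ξ - ξ‖ ≤ |δ| * ε := fun γ hγ => by
    have := hQε.pos
    refine (pow_le_pow_iff_left₀ (norm_nonneg _) (by positivity) two_ne_zero).mp ?_
    rw [hnorm, mul_pow, sq_abs]
    linarith [hQ γ hγ]
  intro γ
  have hle := pow_le_pow_left₀ (norm_nonneg _)
    (hQε.norm_map_sub_le GNSSpace.norm_rep_apply hsmall γ) 2
  rw [hnorm, mul_pow, sq_abs] at hle
  linarith

/-- Proposition 5.3: if `(Q, ε)` is a Kazhdan pair, `δ > 0`, and `φ` is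
positive-definite with `φ(1) = 1` and `Re φ(γ) ≥ 1 - δ²ε²/2` on `Q`, then
`Re φ(γ) ≥ 1 - 2δ²` on all of `Γ`. -/
theorem posdef_almost_invariant_everywhere
    (Γ : Type) [Group Γ] [Countable Γ]
    (Q : Set Γ) (ε : ℝ) (hQε : IsKazhdanPair Γ Q ε)
    (δ : ℝ) (hδ : 0 < δ)
    (φ : Γ → ℂ) (hφ : IsPositiveDefinite φ) (hφ1 : φ 1 = 1)
    (hQ : ∀ γ ∈ Q, 1 - δ ^ 2 * ε ^ 2 / 2 ≤ (φ γ).re) :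
    ∀ γ : Γ, 1 - 2 * δ ^ 2 ≤ (φ γ).re :=
  posdef_almost_invariant_everywhere_general Γ Q ε hQε δ φ hφ hφ1 hQ
end
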